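/- arXiv:2507.04405 — 6 statements merged into one kernel-verified Lean document; each statement's English description precedes it below -/
import Mathlib

section
/- Let δ, ρ > 0, let I ⊂ ℝ be an interval, k ∈ ℕ with k ≥ 1, and let φ be a C^k function on I such that |φ^{(k)}(x)| ≥ ρ for all x ∈ I. Then the Lebesgue measure of {x ∈ I : |φ(x)| < δ} is at most C_k · (δ/ρ)^{1/k}, where C_k is a constant depending only on k. -/
/-!
If `x₀ < ⋯ < x_k` are points of the sublevel set, subtracting from `φ` its Lagrange interpolant
at these nodes and applying Rolle's theorem `k` times gives `ξ` with
`φ⁽ᵏ⁾(ξ) = k! · φ[x₀, …, x_k]`. When any two nodes are at least `h` apart the divided difference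
is less than `(k + 1) δ / h ^ k`, so `ρ h ^ k < k! (k + 1) δ`. A set of measure greater than `k h`
contains such nodes (choose each one so that little of the set lies to its left), hence the
sublevel set has measure at most `k (k! (k + 1) δ / ρ) ^ (1 / k)`.
-/

open MeasureTheory Set Polynomial

theorem Polynomial.iteratedDeriv_eval {𝕜 : Type*} [NontriviallyNormedField 𝕜] (p : 𝕜[X]) (n : ℕ)
    (x : 𝕜) : iteratedDeriv n (fun y => p.eval y) x = (derivative^[n] p).eval x := by
  induction n generalizing p with
  | zero => rfl
  | succ n ih =>
    have hderiv : _root_.deriv (fun y => p.eval y) = fun y => (derivative p).eval y := by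
      funext y
      exact p.deriv
    rw [iteratedDeriv_succ', hderiv, ih, Function.iterate_succ_apply]

theorem Polynomial.contDiff_eval {𝕜 : Type*} [NontriviallyNormedField 𝕜] (p : 𝕜[X])
    (n : WithTop ℕ∞) : ContDiff 𝕜 n fun x => p.eval x := by
  simpa using p.contDiff_aeval (𝕜 := 𝕜) n

theorem exists_iteratedDeriv_eq_zero_of_strictMono {U : Set ℝ} (hUo : IsOpen U)
    (hU : U.OrdConnected) {n : ℕ} {g : ℝ → ℝ} (hg : ContDiffOn ℝ n g U) {x : Fin (n + 1) → ℝ}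
    (hx : StrictMono x) (hxU : ∀ i, x i ∈ U) (hgx : ∀ i, g (x i) = 0) :
    ∃ ξ ∈ U, iteratedDeriv n g ξ = 0 := by
  induction n generalizing g with
  | zero => exact ⟨x 0, hxU 0, hgx 0⟩
  | succ n ih =>
    have hIcc (i : Fin (n + 1)) : Icc (x i.castSucc) (x i.succ) ⊆ U :=
      hU.out (hxU _) (hxU _)
    have rolle (i : Fin (n + 1)) : ∃ c ∈ Ioo (x i.castSucc) (x i.succ), deriv g c = 0 :=
      exists_deriv_eq_zero (hx Fin.castSucc_lt_succ) (hg.continuousOn.mono (hIcc i))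
        ((hgx _).trans (hgx _).symm)
    choose y hy hgy using rolle
    have hy_mono : StrictMono y := Fin.strictMono_iff_lt_succ.2 fun i =>
      (hy _).2.trans_le (le_of_eq (by rw [Fin.succ_castSucc])) |>.trans ((hy _).1)
    obtain ⟨ξ, hξ, hξ0⟩ := ih (hg.deriv_of_isOpen hUo (by norm_cast)) hy_mono
      (fun i => hIcc i (Ioo_subset_Icc_self (hy i))) hgy
    exact ⟨ξ, hξ, by rwa [iteratedDeriv_succ']⟩

open Finset in
/-- The divided difference `f[x₀, …, xₙ]`, in Lagrange form. -/
noncomputable def dividedDifference {n : ℕ} (f : ℝ → ℝ) (x : Fin (n + 1) → ℝ) : ℝ :=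
  ∑ i, f (x i) / ∏ j ∈ univ.erase i, (x i - x j)

open Finset in
theorem exists_iteratedDeriv_eq_factorial_mul_dividedDifference {U : Set ℝ} (hUo : IsOpen U)
    (hU : U.OrdConnected) {n : ℕ} {f : ℝ → ℝ} (hf : ContDiffOn ℝ n f U) {x : Fin (n + 1) → ℝ}
    (hx : StrictMono x) (hxU : ∀ i, x i ∈ U) :
    ∃ ξ ∈ U, iteratedDeriv n f ξ = n.factorial * dividedDifference f x := by
  have hinj : InjOn x (univ : Finset (Fin (n + 1))) := hx.injective.injOn
  set P := Lagrange.interpolate univ x fun i => f (x i)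
  have hP : P.degree < #(univ : Finset (Fin (n + 1))) := Lagrange.degree_interpolate_lt _ hinj
  have hPx (i : Fin (n + 1)) : P.eval (x i) = f (x i) :=
    Lagrange.eval_interpolate_at_node _ hinj (mem_univ i)
  obtain ⟨ξ, hξU, hξ⟩ := exists_iteratedDeriv_eq_zero_of_strictMono hUo hU
    (hf.sub (P.contDiff_eval n).contDiffOn) hx hxU fun i => sub_eq_zero.2 (hPx i).symm
  refine ⟨ξ, hξU, ?_⟩
  rw [iteratedDeriv_fun_sub (hf.contDiffAt (hUo.mem_nhds hξU)) (P.contDiff_eval n).contDiffAt,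
    P.iteratedDeriv_eval, Lagrange.eval_iterate_derivative_eq_sum hinj hP (by simp)] at hξ
  simpa [dividedDifference, hPx, sub_eq_zero] using hξ

open Finset in
theorem abs_dividedDifference_lt {n : ℕ} {f : ℝ → ℝ} {x : Fin (n + 1) → ℝ} {δ h : ℝ}
    (hh : 0 < h) (hfx : ∀ i, |f (x i)| < δ) (hx : ∀ i j, i ≠ j → h ≤ |x i - x j|) :
    |dividedDifference f x| < (n + 1) * δ / h ^ n := by
  have hprod (i : Fin (n + 1)) : h ^ n ≤ ∏ j ∈ univ.erase i, |x i - x j| := by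
    calc h ^ n = ∏ _j ∈ univ.erase i, h := by simp
      _ ≤ ∏ j ∈ univ.erase i, |x i - x j| :=
        prod_le_prod (fun _ _ => hh.le) fun j hj => hx i j (ne_of_mem_erase hj).symm
  calc |dividedDifference f x| ≤ ∑ i, |f (x i)| / ∏ j ∈ univ.erase i, |x i - x j| := by
        simpa only [dividedDifference, abs_div, abs_prod] using
          abs_sum_le_sum_abs (fun i => f (x i) / ∏ j ∈ univ.erase i, (x i - x j)) univ
    _ < ∑ _i : Fin (n + 1), δ / h ^ n := by
        refine sum_lt_sum_of_nonempty univ_nonempty fun i _ => ?_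
        calc |f (x i)| / ∏ j ∈ univ.erase i, |x i - x j| ≤ |f (x i)| / h ^ n :=
              div_le_div_of_nonneg_left (abs_nonneg _) (by positivity) (hprod i)
          _ < δ / h ^ n := div_lt_div_of_pos_right (hfx i) (by positivity)
    _ = (n + 1) * δ / h ^ n := by simp [mul_div_assoc]

theorem exists_mem_volume_inter_Iio_lt {A : Set ℝ} (hA : BddBelow A) (hne : A.Nonempty)
    {ε : ENNReal} (hε : 0 < ε) : ∃ x ∈ A, volume (A ∩ Iio x) < ε := by
  obtain ⟨r, -, hr0, hrε⟩ := ENNReal.lt_iff_exists_real_btwn.1 hε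
  obtain ⟨x, hxA, hx⟩ := Real.lt_sInf_add_pos hne (ENNReal.ofReal_pos.1 hr0)
  refine ⟨x, hxA, lt_of_le_of_lt ?_ hrε⟩
  calc volume (A ∩ Iio x) ≤ volume (Ico (sInf A) x) :=
        measure_mono fun y hy => ⟨csInf_le hA hy.1, hy.2⟩
    _ = ENNReal.ofReal (x - sInf A) := Real.volume_Ico
    _ ≤ ENNReal.ofReal r := ENNReal.ofReal_le_ofReal (by linarith)

theorem exists_separated_of_lt_volume_of_bddBelow {h : ℝ} (hh : 0 ≤ h) (n : ℕ) {A : Set ℝ}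
    (hA : BddBelow A) (hvol : ENNReal.ofReal (n * h) < volume A) :
    ∃ x : Fin (n + 1) → ℝ, (∀ i, x i ∈ A) ∧ ∀ i j, i < j → x i + h ≤ x j := by
  have hne : A.Nonempty := nonempty_of_measure_ne_zero (pos_of_gt hvol).ne'
  induction n generalizing A with
  | zero =>
    obtain ⟨a, ha⟩ := hne
    exact ⟨fun _ => a, fun _ => ha, fun i j hij => absurd hij (by omega)⟩
  | succ n ih =>
    obtain ⟨x₀, hx₀A, hx₀⟩ := exists_mem_volume_inter_Iio_lt hA hne (tsub_pos_of_lt hvol)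
    rw [lt_tsub_iff_right] at hx₀
    set B := A ∩ Ici (x₀ + h)
    have hB : ENNReal.ofReal (n * h) < volume B := by
      by_contra! hB
      refine hx₀.not_ge ?_
      have hcover : A ⊆ (A ∩ Iio x₀) ∪ Ico x₀ (x₀ + h) ∪ B := by
        intro y hy
        rcases lt_or_ge y x₀ with hy₀ | hy₀
        · exact Or.inl (Or.inl ⟨hy, hy₀⟩)
        rcases lt_or_ge y (x₀ + h) with hyh | hyh
        · exact Or.inl (Or.inr ⟨hy₀, hyh⟩)
        · exact Or.inr ⟨hy, hyh⟩
      calc volume A ≤ volume (A ∩ Iio x₀) + volume (Ico x₀ (x₀ + h)) + volume B :=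
            (measure_mono hcover).trans <|
              (measure_union_le _ _).trans (add_le_add_left (measure_union_le _ _) _)
        _ ≤ volume (A ∩ Iio x₀) + ENNReal.ofReal h + ENNReal.ofReal (n * h) := by
            rw [Real.volume_Ico, add_sub_cancel_left]
            gcongr
        _ = volume (A ∩ Iio x₀) + ENNReal.ofReal ((n + 1 : ℕ) * h) := by
            rw [add_assoc, ← ENNReal.ofReal_add hh (by positivity)]
            push_cast
            ring_nf
    obtain ⟨y, hyB, hy⟩ := ih (hA.mono inter_subset_left) hB
      (nonempty_of_measure_ne_zero (pos_of_gt hB).ne')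
    refine ⟨Fin.cons x₀ y, Fin.cases hx₀A fun i => (hyB i).1, fun i j hij => ?_⟩
    cases j using Fin.cases with
    | zero => exact absurd hij (Fin.not_lt_zero i)
    | succ j =>
      cases i using Fin.cases with
      | zero => simpa using (hyB j).2
      | succ i => simpa using hy i j (Fin.succ_lt_succ_iff.1 hij)

theorem exists_separated_of_lt_volume {h : ℝ} (hh : 0 ≤ h) (n : ℕ) {A : Set ℝ}
    (hvol : ENNReal.ofReal (n * h) < volume A) :
    ∃ x : Fin (n + 1) → ℝ, (∀ i, x i ∈ A) ∧ ∀ i j, i < j → x i + h ≤ x j := by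
  have hmono : Monotone fun N : ℕ => A ∩ Ici (-(N : ℝ)) := fun a b hab =>
    inter_subset_inter_right _ (Ici_subset_Ici.2 (by simpa using hab))
  have hunion : (⋃ N : ℕ, A ∩ Ici (-(N : ℝ))) = A := by
    refine (iUnion_subset fun _ => inter_subset_left).antisymm fun y hy => ?_
    obtain ⟨N, hN⟩ := exists_nat_ge (-y)
    exact mem_iUnion.2 ⟨N, hy, by simp only [mem_Ici]; linarith⟩
  rw [← hunion, hmono.measure_iUnion] at hvol
  obtain ⟨N, hN⟩ := lt_iSup_iff.1 hvol
  obtain ⟨x, hxA, hx⟩ :=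
    exists_separated_of_lt_volume_of_bddBelow hh n ⟨-N, fun y hy => hy.2⟩ hN
  exact ⟨x, fun i => (hxA i).1, hx⟩

theorem mul_pow_lt_of_separated_sublevel {U : Set ℝ} (hUo : IsOpen U) (hU : U.OrdConnected)
    {k : ℕ} {f : ℝ → ℝ} (hf : ContDiffOn ℝ k f U) {ρ δ h : ℝ} (hh : 0 < h)
    (hρ : ∀ x ∈ U, ρ ≤ |iteratedDeriv k f x|) {x : Fin (k + 1) → ℝ} (hxU : ∀ i, x i ∈ U)
    (hfx : ∀ i, |f (x i)| < δ) (hx : ∀ i j, i < j → x i + h ≤ x j) :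
    ρ * h ^ k < k.factorial * (k + 1) * δ := by
  have hmono : StrictMono x := fun i j hij => by linarith [hx i j hij]
  have hsep (i j : Fin (k + 1)) (hij : i ≠ j) : h ≤ |x i - x j| := by
    rcases hij.lt_or_gt with hlt | hlt
    · exact le_abs.2 (Or.inr (by linarith [hx i j hlt]))
    · exact le_abs.2 (Or.inl (by linarith [hx j i hlt]))
  obtain ⟨ξ, hξU, hξ⟩ :=
    exists_iteratedDeriv_eq_factorial_mul_dividedDifference hUo hU hf hmono hxU
  have hρξ := hρ ξ hξU
  rw [hξ, abs_mul, Nat.abs_cast] at hρξ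
  calc ρ * h ^ k ≤ k.factorial * |dividedDifference f x| * h ^ k := by gcongr
    _ < k.factorial * ((k + 1) * δ / h ^ k) * h ^ k := by
        gcongr
        exact abs_dividedDifference_lt hh hfx hsep
    _ = k.factorial * (k + 1) * δ := by field_simp

theorem iteratedDerivWithin_eq_iteratedDeriv_of_mem_interior {I : Set ℝ} (hI : Convex ℝ I)
    {n : ℕ} {f : ℝ → ℝ} (hf : ContDiffOn ℝ n f I) {x : ℝ} (hx : x ∈ interior I) :
    iteratedDerivWithin n f I x = iteratedDeriv n f x :=
  iteratedDerivWithin_eq_iteratedDeriv (uniqueDiffOn_convex hI ⟨x, hx⟩)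
    (hf.contDiffAt (mem_interior_iff_mem_nhds.1 hx)) (interior_subset hx)

theorem Convex.volume_sep_le_sep_interior {I : Set ℝ} (hI : Convex ℝ I) (p : ℝ → Prop) :
    volume {x ∈ I | p x} ≤ volume {x ∈ interior I | p x} :=
  calc volume {x ∈ I | p x} ≤ volume ({x ∈ interior I | p x} ∪ frontier I) :=
        measure_mono fun x hx => (em (x ∈ interior I)).imp (fun hi => ⟨hi, hx.2⟩)
          fun hi => ⟨subset_closure hx.1, hi⟩
    _ ≤ volume {x ∈ interior I | p x} + volume (frontier I) := measure_union_le _ _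
    _ = volume {x ∈ interior I | p x} := by rw [hI.addHaar_frontier volume, add_zero]

theorem stmt_6 (k : ℕ) (hk : 1 ≤ k) :
    ∃ C : ℝ, 0 < C ∧ ∀ I : Set ℝ, I.OrdConnected → ∀ φ : ℝ → ℝ,
      ContDiffOn ℝ (k : ℕ∞) φ I →
      ∀ δ ρ : ℝ, 0 < δ → 0 < ρ →
      (∀ x ∈ I, ρ ≤ |iteratedDerivWithin k φ I x|) →
      volume {x ∈ I | |φ x| < δ} ≤ ENNReal.ofReal (C * (δ / ρ) ^ ((k : ℝ)⁻¹)) := by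
  set K : ℝ := k.factorial * (k + 1)
  refine ⟨k * K ^ (k : ℝ)⁻¹, by positivity, fun I hI φ hφ δ ρ hδ hρ hρφ => ?_⟩
  set h := (K * δ / ρ) ^ (k : ℝ)⁻¹
  have hh : 0 < h := by positivity
  have hhk : ρ * h ^ k = K * δ := by
    rw [← Real.rpow_natCast, ← Real.rpow_mul (by positivity),
      inv_mul_cancel₀ (by positivity), Real.rpow_one]
    field_simp
  have hC : k * K ^ (k : ℝ)⁻¹ * (δ / ρ) ^ (k : ℝ)⁻¹ = k * h := by
    rw [mul_assoc, ← Real.mul_rpow (by positivity) (by positivity), ← mul_div_assoc]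
  rw [hC]
  refine (hI.convex.volume_sep_le_sep_interior _).trans (not_lt.1 fun hvol => ?_)
  obtain ⟨x, hxE, hx⟩ := exists_separated_of_lt_volume hh.le k hvol
  have hρφ' (y : ℝ) (hy : y ∈ interior I) : ρ ≤ |iteratedDeriv k φ y| :=
    iteratedDerivWithin_eq_iteratedDeriv_of_mem_interior hI.convex hφ hy ▸
      hρφ y (interior_subset hy)
  have hlt := mul_pow_lt_of_separated_sublevel isOpen_interior hI.interior
    (hφ.mono interior_subset) hh hρφ' (fun i => (hxE i).1) (fun i => (hxE i).2) hx
  linarith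
end

section
/- Let f : I₀ → ℝ^m be a C^m parameterization of a curve (m ≥ 2) such that the Wronskian det[f'(t),…,f^{(m)}(t)] is bounded below in absolute value by a positive constant on I₀ and all derivatives f^{(k)}, 1 ≤ k ≤ m, are bounded on I₀. Then, possibly after shrinking I₀ to a subinterval, for all p ∈ ℝ^m and δ > 0, the Lebesgue measure of {s ∈ I₀ : |p · f'(s)| ≤ δ} is at most C·(δ/‖p‖)^{1/(m−1)}, where C depends only on f and m. -/
/-!
Continuity of the Wronskian matrix `W` gives an interval `[a, b']` on which, for every direction
`p`, one of the functions `p ⬝ᵥ f⁽ʲ⁺¹⁾` with `j < m` stays above `c ‖p‖` in absolute value: the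
largest coordinate of `p ᵥ* W a` keeps dominating by uniform continuity. A van der Corput type
sublevel estimate then bounds the measure of `{|p ⬝ᵥ f'| ≤ δ}` by `4 ^ j (δ / c ‖p‖) ^ (1 / j)`:
by induction on `j`, `|p ⬝ᵥ f⁽ʲ⁾|` is smaller than `ρ` only on an interval of length `O(ρ / c)`,
its derivative being large, and the induction hypothesis with lower bound `ρ` handles the rest;
the optimal `ρ` produces the exponent `1 / j`. For small `δ` the exponent `1 / j` may be lowered
to `1 / (m - 1)`, and for large `δ` the length of `[a, b']` is already a bound.
-/

open MeasureTheory

/-- The Euclidean norm of a vector in `Fin k → ℝ`. -/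
noncomputable def euclNorm {k : ℕ} (v : Fin k → ℝ) : ℝ :=
  Real.sqrt (∑ i, (v i) ^ 2)

open Set
open scoped Matrix

theorem Matrix.exists_pos_le_norm_vecMul_of_mem_sphere {ι : Type*} [Fintype ι] [DecidableEq ι]
    {A : Matrix ι ι ℝ} (hA : A.det ≠ 0) :
    ∃ c > 0, ∀ v ∈ Metric.sphere (0 : ι → ℝ) 1, c ≤ ‖v ᵥ* A‖ :=
  (isCompact_sphere 0 1).exists_forall_le'
    (continuous_id.matrix_vecMul continuous_const).norm.continuousOn fun v hv =>
      norm_pos_iff.2 fun h0 =>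
        hA (exists_vecMul_eq_zero_iff.1 ⟨v, ne_zero_of_mem_unit_sphere ⟨v, hv⟩, h0⟩)

theorem exists_forall_le_abs_vecMul_apply_of_mem_sphere {ι : Type*} [Fintype ι] [DecidableEq ι]
    {N : ℝ → Matrix ι ι ℝ} {a b : ℝ} (hab : a < b) (hN : ContinuousOn N (Icc a b))
    (hdet : (N a).det ≠ 0) :
    ∃ b' ∈ Ioc a b, ∃ c > 0, ∀ v ∈ Metric.sphere (0 : ι → ℝ) 1,
      ∃ j, ∀ s ∈ Icc a b', c ≤ |(v ᵥ* N s) j| := by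
  obtain ⟨c, hc, hcN⟩ := Matrix.exists_pos_le_norm_vecMul_of_mem_sphere hdet
  have hK : IsCompact (Icc a b ×ˢ Metric.sphere (0 : ι → ℝ) 1) :=
    isCompact_Icc.prod (isCompact_sphere 0 1)
  have hcont : ContinuousOn (fun q : ℝ × (ι → ℝ) => q.2 ᵥ* N q.1)
      (Icc a b ×ˢ Metric.sphere (0 : ι → ℝ) 1) :=
    (continuous_snd.matrix_vecMul continuous_fst).comp_continuousOn
      ((hN.comp continuousOn_fst fun q hq => hq.1).prodMk continuousOn_snd)
  obtain ⟨η, hη, hclose⟩ :=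
    Metric.uniformContinuousOn_iff.1 (hK.uniformContinuousOn_of_continuous hcont) (c / 2)
      (half_pos hc)
  set b' := min (a + η / 2) b
  have hb' : Icc a b' ⊆ Icc a b := Icc_subset_Icc_right (min_le_right _ _)
  refine ⟨b', ⟨lt_min (by linarith) hab, min_le_right _ _⟩, c / 2, half_pos hc, fun v hv => ?_⟩
  obtain ⟨j, hj⟩ : ∃ j, c ≤ |(v ᵥ* N a) j| := by
    by_contra! h
    exact (hcN v hv).not_gt ((pi_norm_lt_iff hc).2 h)
  refine ⟨j, fun s hs => ?_⟩
  have hsa : dist (v ᵥ* N s) (v ᵥ* N a) < c / 2 := by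
    refine hclose (s, v) ⟨hb' hs, hv⟩ (a, v) ⟨left_mem_Icc.2 hab.le, hv⟩ ?_
    rw [Prod.dist_eq, dist_self, Real.dist_eq, abs_of_nonneg (by linarith [hs.1])]
    simp only [max_lt_iff]
    constructor <;> linarith [hs.2.trans (min_le_left _ _)]
  have hj' : |(v ᵥ* N a) j - (v ᵥ* N s) j| < c / 2 := by
    rw [abs_sub_comm]
    exact (dist_le_pi_dist _ _ j).trans_lt hsa
  linarith [abs_sub_abs_le_abs_sub ((v ᵥ* N a) j) ((v ᵥ* N s) j)]

theorem exists_forall_mul_norm_le_abs_vecMul_apply {ι : Type*} [Fintype ι] [DecidableEq ι]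
    {N : ℝ → Matrix ι ι ℝ} {a b : ℝ} (hab : a < b) (hN : ContinuousOn N (Icc a b))
    (hdet : (N a).det ≠ 0) :
    ∃ b' ∈ Ioc a b, ∃ c > 0, ∀ v : ι → ℝ, v ≠ 0 →
      ∃ j, ∀ s ∈ Icc a b', c * ‖v‖ ≤ |(v ᵥ* N s) j| := by
  obtain ⟨b', hb', c, hc, hunit⟩ := exists_forall_le_abs_vecMul_apply_of_mem_sphere hab hN hdet
  refine ⟨b', hb', c, hc, fun v hv => ?_⟩
  have hv' : 0 < ‖v‖ := norm_pos_iff.2 hv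
  obtain ⟨j, hj⟩ := hunit (‖v‖⁻¹ • v) (by simp [norm_smul, hv'.ne'])
  refine ⟨j, fun s hs => ?_⟩
  have := hj s hs
  rwa [Matrix.smul_vecMul, Pi.smul_apply, smul_eq_mul, abs_mul, abs_inv, abs_norm,
    le_inv_mul_iff₀ hv', mul_comm] at this

theorem Convex.mul_sub_le_sub_of_hasDerivWithinAt {D : Set ℝ} (hD : Convex ℝ D) {g g' : ℝ → ℝ}
    {C : ℝ} (hg : ∀ x ∈ D, HasDerivWithinAt g (g' x) D x) (hC : ∀ x ∈ D, C ≤ g' x) {x y : ℝ}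
    (hx : x ∈ D) (hy : y ∈ D) (hxy : x ≤ y) : C * (y - x) ≤ g y - g x := by
  have hderiv : ∀ z ∈ interior D, HasDerivAt g (g' z) z := fun z hz =>
    (hg z (interior_subset hz)).hasDerivAt (mem_interior_iff_mem_nhds.1 hz)
  exact hD.mul_sub_le_image_sub_of_le_deriv (fun z hz => (hg z hz).continuousWithinAt)
    (fun z hz => (hderiv z hz).differentiableAt.differentiableWithinAt)
    (fun z hz => (hderiv z hz).deriv ▸ hC z (interior_subset hz)) x hx y hy hxy

theorem Convex.mul_abs_sub_le_abs_sub_of_le_abs_deriv {D : Set ℝ} (hD : Convex ℝ D)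
    {g g' : ℝ → ℝ} {c : ℝ} (hc : 0 < c) (hg : ∀ x ∈ D, HasDerivWithinAt g (g' x) D x)
    (hg' : ∀ x ∈ D, c ≤ |g' x|) {x y : ℝ} (hx : x ∈ D) (hy : y ∈ D) :
    c * |y - x| ≤ |g y - g x| := by
  wlog hxy : x ≤ y generalizing x y
  · rw [abs_sub_comm, abs_sub_comm (g y)]
    exact this hy hx (le_of_not_ge hxy)
  rw [abs_of_nonneg (sub_nonneg.2 hxy)]
  have hne : ∀ z ∈ D, g' z ≠ 0 := fun z hz h0 => by
    have := hg' z hz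
    rw [h0, abs_zero] at this
    linarith
  rcases hasDerivWithinAt_forall_lt_or_forall_gt_of_forall_ne hD hg hne with hneg | hpos
  · have := hD.mul_sub_le_sub_of_hasDerivWithinAt (fun z hz => (hg z hz).neg)
      (fun z hz => abs_of_neg (hneg z hz) ▸ hg' z hz) hx hy hxy
    simp only [Pi.neg_apply] at this
    rw [abs_sub_comm]
    linarith [le_abs_self (g x - g y)]
  · have := hD.mul_sub_le_sub_of_hasDerivWithinAt hg
      (fun z hz => abs_of_pos (hpos z hz) ▸ hg' z hz) hx hy hxy
    linarith [le_abs_self (g y - g x)]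

theorem Convex.abs_sub_le_of_le_abs_deriv {D : Set ℝ} (hD : Convex ℝ D) {g g' : ℝ → ℝ}
    {c r : ℝ} (hc : 0 < c) (hg : ∀ x ∈ D, HasDerivWithinAt g (g' x) D x)
    (hg' : ∀ x ∈ D, c ≤ |g' x|) {x y : ℝ} (hx : x ∈ D) (hy : y ∈ D) (hgx : |g x| ≤ r)
    (hgy : |g y| ≤ r) : |y - x| ≤ 2 * r / c := by
  rw [le_div_iff₀' hc]
  calc c * |y - x| ≤ |g y - g x| := hD.mul_abs_sub_le_abs_sub_of_le_abs_deriv hc hg hg' hx hy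
    _ ≤ |g y| + |g x| := abs_sub _ _
    _ ≤ 2 * r := by linarith

theorem Real.div_rpow_inv_succ_rpow_inv {x : ℝ} (hx : 0 < x) {k : ℕ} (hk : 1 ≤ k) :
    (x / x ^ ((k : ℝ) + 1)⁻¹) ^ (k : ℝ)⁻¹ = x ^ ((k : ℝ) + 1)⁻¹ := by
  rw [← Real.rpow_one_sub' hx.le
    (sub_ne_zero.2 (inv_lt_one_of_one_lt₀ (by norm_cast; omega)).ne'), ← Real.rpow_mul hx.le]
  congr 1
  field_simp
  ring

theorem volume_Icc_inter_le_of_le_abs_deriv {g g' : ℝ → ℝ} {u v c ρ : ℝ} (T : Set ℝ)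
    {B : ENNReal} (hc : 0 < c) (hg : ∀ s ∈ Icc u v, HasDerivWithinAt g (g' s) (Icc u v) s)
    (hg' : ∀ s ∈ Icc u v, c ≤ |g' s|)
    (hB : ∀ u' v', Icc u' v' ⊆ Icc u v → (∀ s ∈ Icc u' v', ρ ≤ |g s|) →
      volume (Icc u' v' ∩ T) ≤ B) :
    volume (Icc u v ∩ T) ≤ B + ENNReal.ofReal (8 * ρ / c) + B := by
  by_cases hS : ∀ s ∈ Icc u v, ρ ≤ |g s|
  · exact (hB u v subset_rfl hS).trans le_add_self
  push Not at hS
  obtain ⟨x₁, hx₁, hx₁ρ⟩ := hS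
  -- `|g| < ρ` only within `d` of `x₁`; cutting out `[x₁ - 2d, x₁ + 2d]` costs `4d = 8ρ / c`
  set d := 2 * ρ / c
  have hd : 0 < d := by have := (abs_nonneg (g x₁)).trans_lt hx₁ρ; positivity
  have hfar : ∀ s ∈ Icc u v, d < |s - x₁| → ρ ≤ |g s| := fun s hs hsd =>
    not_lt.1 fun hsρ => ((convex_Icc u v).abs_sub_le_of_le_abs_deriv hc hg hg' hx₁ hs
      hx₁ρ.le hsρ.le).not_gt hsd
  have hL := hB u (x₁ - 2 * d) (Icc_subset_Icc_right (by linarith [hx₁.2])) fun s hs =>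
    hfar s ⟨hs.1, by linarith [hx₁.2, hs.2]⟩
      (by rw [abs_sub_comm, abs_of_pos] <;> linarith [hs.2])
  have hR := hB (x₁ + 2 * d) v (Icc_subset_Icc_left (by linarith [hx₁.1])) fun s hs =>
    hfar s ⟨by linarith [hx₁.1, hs.1], hs.2⟩
      (by rw [abs_of_pos] <;> linarith [hs.1])
  have hcover : Icc u v ∩ T ⊆ (Icc u (x₁ - 2 * d) ∩ T ∪ Icc (x₁ - 2 * d) (x₁ + 2 * d)) ∪
      Icc (x₁ + 2 * d) v ∩ T := by
    rintro s ⟨hs, hsT⟩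
    rcases le_total s (x₁ - 2 * d) with h | h
    · exact Or.inl (Or.inl ⟨⟨hs.1, h⟩, hsT⟩)
    rcases le_total s (x₁ + 2 * d) with h' | h'
    · exact Or.inl (Or.inr ⟨h, h'⟩)
    · exact Or.inr ⟨⟨h', hs.2⟩, hsT⟩
  have hmid : volume (Icc (x₁ - 2 * d) (x₁ + 2 * d)) = ENNReal.ofReal (8 * ρ / c) := by
    rw [Real.volume_Icc]
    congr 1
    simp only [d]
    ring
  calc volume (Icc u v ∩ T)
      ≤ volume (Icc u (x₁ - 2 * d) ∩ T) + volume (Icc (x₁ - 2 * d) (x₁ + 2 * d))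
        + volume (Icc (x₁ + 2 * d) v ∩ T) :=
        (measure_mono hcover).trans ((measure_union_le _ _).trans
          (add_le_add_left (measure_union_le _ _) _))
    _ ≤ B + ENNReal.ofReal (8 * ρ / c) + B := by
        rw [hmid]
        gcongr

theorem volume_sublevel_le_of_hasDerivWithinAt_chain (G : ℕ → ℝ → ℝ) {k : ℕ} (hk : 1 ≤ k)
    {u v c δ : ℝ} (hc : 0 < c) (hδ : 0 < δ)
    (hG : ∀ j < k, ∀ s ∈ Icc u v, HasDerivWithinAt (G j) (G (j + 1) s) (Icc u v) s)
    (hGk : ∀ s ∈ Icc u v, c ≤ |G k s|) :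
    volume {s ∈ Icc u v | |G 0 s| ≤ δ} ≤ ENNReal.ofReal (4 ^ k * (δ / c) ^ (k : ℝ)⁻¹) := by
  induction k, hk using Nat.le_induction generalizing u v c with
  | base =>
    calc volume {s ∈ Icc u v | |G 0 s| ≤ δ} ≤ Metric.ediam {s ∈ Icc u v | |G 0 s| ≤ δ} :=
          Real.volume_le_diam _
      _ ≤ ENNReal.ofReal (2 * δ / c) := Metric.ediam_le fun s hs t ht => by
          rw [edist_dist, Real.dist_eq, abs_sub_comm]
          exact ENNReal.ofReal_le_ofReal ((convex_Icc u v).abs_sub_le_of_le_abs_deriv hc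
            (hG 0 one_pos) hGk hs.1 ht.1 hs.2 ht.2)
      _ ≤ ENNReal.ofReal (4 ^ 1 * (δ / c) ^ ((1 : ℕ) : ℝ)⁻¹) := by
          apply ENNReal.ofReal_le_ofReal
          rw [Nat.cast_one, inv_one, Real.rpow_one, mul_div_assoc]
          gcongr
          norm_num
  | succ k hk ih =>
    set x := δ / c
    have hx : 0 < x := div_pos hδ hc
    set e : ℝ := ((k : ℝ) + 1)⁻¹
    have hxe : 0 < x ^ e := Real.rpow_pos_of_pos hx e
    -- this `ρ` makes `(δ / ρ) ^ k⁻¹ = (δ / c) ^ (k + 1)⁻¹`, balancing the two error terms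
    set ρ := c * x ^ e
    have hIH : ∀ u' v', Icc u' v' ⊆ Icc u v → (∀ s ∈ Icc u' v', ρ ≤ |G k s|) →
        volume {s ∈ Icc u' v' | |G 0 s| ≤ δ} ≤ ENNReal.ofReal (4 ^ k * x ^ e) := by
      intro u' v' huv hlow
      have := ih (mul_pos hc hxe) (fun j hj s hs => (hG j (by omega) s (huv hs)).mono huv) hlow
      rwa [show δ / ρ = x / x ^ e by rw [div_mul_eq_div_div],
        Real.div_rpow_inv_succ_rpow_inv hx hk] at this
    have hcast : (((k + 1 : ℕ) : ℝ))⁻¹ = e := by push_cast; rfl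
    have h4k : (4 : ℝ) ≤ 4 ^ k := le_self_pow₀ (by norm_num) (by omega)
    calc volume {s ∈ Icc u v | |G 0 s| ≤ δ}
        ≤ ENNReal.ofReal (4 ^ k * x ^ e) + ENNReal.ofReal (8 * ρ / c)
          + ENNReal.ofReal (4 ^ k * x ^ e) :=
          volume_Icc_inter_le_of_le_abs_deriv _ hc (hG k (by omega)) hGk hIH
      _ = ENNReal.ofReal ((2 * 4 ^ k + 8) * x ^ e) := by
          rw [← ENNReal.ofReal_add (by positivity) (by positivity),
            ← ENNReal.ofReal_add (by positivity) (by positivity)]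
          congr 1
          field_simp
          ring
      _ ≤ ENNReal.ofReal (4 ^ (k + 1) * (δ / c) ^ (((k + 1 : ℕ) : ℝ))⁻¹) := by
          rw [hcast, pow_succ]
          gcongr
          linarith

theorem volume_sublevel_le_of_hasDerivWithinAt_chain_of_le (G : ℕ → ℝ → ℝ) {k n : ℕ}
    (hkn : k ≤ n) (hn : 1 ≤ n) {u v c δ : ℝ} (huv : u ≤ v) (hc : 0 < c) (hδ : 0 < δ)
    (hG : ∀ j < k, ∀ s ∈ Icc u v, HasDerivWithinAt (G j) (G (j + 1) s) (Icc u v) s)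
    (hGk : ∀ s ∈ Icc u v, c ≤ |G k s|) :
    volume {s ∈ Icc u v | |G 0 s| ≤ δ} ≤
      ENNReal.ofReal ((v - u + 4 ^ n) * (δ / c) ^ (n : ℝ)⁻¹) := by
  have hx : 0 < δ / c := div_pos hδ hc
  rcases le_or_gt c δ with hcδ | hδc
  · have hpow : 1 ≤ (δ / c) ^ (n : ℝ)⁻¹ :=
      Real.one_le_rpow ((one_le_div hc).2 hcδ) (by positivity)
    calc volume {s ∈ Icc u v | |G 0 s| ≤ δ} ≤ volume (Icc u v) := measure_mono fun s hs => hs.1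
      _ = ENNReal.ofReal (v - u) := Real.volume_Icc
      _ ≤ _ := by
          apply ENNReal.ofReal_le_ofReal
          have h4 : (0 : ℝ) ≤ 4 ^ n * (δ / c) ^ (n : ℝ)⁻¹ := by positivity
          nlinarith [mul_le_mul_of_nonneg_left hpow (sub_nonneg.2 huv)]
  rcases Nat.eq_zero_or_pos k with rfl | hk
  · have hempty : {s ∈ Icc u v | |G 0 s| ≤ δ} = ∅ :=
      eq_empty_of_forall_notMem fun s hs => (hδc.trans_le (hGk s hs.1)).not_ge hs.2
    rw [hempty, measure_empty]
    exact zero_le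
  have hx1 : δ / c ≤ 1 := (div_le_one hc).2 hδc.le
  refine (volume_sublevel_le_of_hasDerivWithinAt_chain G hk hc hδ hG hGk).trans
    (ENNReal.ofReal_le_ofReal ?_)
  calc 4 ^ k * (δ / c) ^ (k : ℝ)⁻¹ ≤ 4 ^ n * (δ / c) ^ (n : ℝ)⁻¹ := by
        refine mul_le_mul (pow_le_pow_right₀ (by norm_num) hkn)
          (Real.rpow_le_rpow_of_exponent_ge hx hx1 ?_) (by positivity) (by positivity)
        gcongr
    _ ≤ (v - u + 4 ^ n) * (δ / c) ^ (n : ℝ)⁻¹ := by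
        gcongr
        linarith

theorem ContDiffOn.hasDerivWithinAt_iteratedDerivWithin {F : Type*} [NormedAddCommGroup F]
    [NormedSpace ℝ F] {f : ℝ → F} {s : Set ℝ} {n : WithTop ℕ∞} {k : ℕ} (hf : ContDiffOn ℝ n f s)
    (hk : k < n) (hs : UniqueDiffOn ℝ s) {t : ℝ} (ht : t ∈ s) :
    HasDerivWithinAt (iteratedDerivWithin k f s) (iteratedDerivWithin (k + 1) f s t) s t := by
  rw [iteratedDerivWithin_succ]
  exact (hf.differentiableOn_iteratedDerivWithin hk hs t ht).hasDerivWithinAt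

theorem HasDerivWithinAt.const_dotProduct {ι : Type*} [Fintype ι] {g : ℝ → ι → ℝ} {g' : ι → ℝ}
    {s : Set ℝ} {t : ℝ} (hg : HasDerivWithinAt g g' s t) (p : ι → ℝ) :
    HasDerivWithinAt (fun x => p ⬝ᵥ g x) (p ⬝ᵥ g') s t :=
  HasDerivWithinAt.fun_sum fun i _ => (hasDerivWithinAt_pi.1 hg i).const_mul (p i)

theorem euclNorm_pos {k : ℕ} {v : Fin k → ℝ} (hv : v ≠ 0) : 0 < euclNorm v := by
  obtain ⟨i, hi⟩ : ∃ i, v i ≠ 0 := Function.ne_iff.1 hv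
  exact Real.sqrt_pos.2 (Finset.sum_pos' (fun i _ => sq_nonneg _)
    ⟨i, Finset.mem_univ i, by positivity⟩)

theorem euclNorm_le_sqrt_mul_norm {k : ℕ} (v : Fin k → ℝ) : euclNorm v ≤ √k * ‖v‖ := by
  rw [euclNorm, ← Real.sqrt_sq (norm_nonneg v), ← Real.sqrt_mul (Nat.cast_nonneg k)]
  apply Real.sqrt_le_sqrt
  calc ∑ i, v i ^ 2 ≤ ∑ _i : Fin k, ‖v‖ ^ 2 := Finset.sum_le_sum fun i _ => by
        rw [← sq_abs]
        gcongr
        exact norm_le_pi_norm v i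
    _ = k * ‖v‖ ^ 2 := by simp

theorem stmt_7_general (m : ℕ) (hm : 2 ≤ m) (a b : ℝ) (hab : a < b) (f : ℝ → Fin m → ℝ)
    (hf : ContDiffOn ℝ (m : ℕ∞) f (Set.Icc a b))
    (w : ℝ) (hw : 0 < w)
    (hWron : ∀ t ∈ Set.Icc a b,
      w ≤ |(Matrix.of fun i j : Fin m =>
        iteratedDerivWithin ((j : ℕ) + 1) f (Set.Icc a b) t i).det|) :
    ∃ a' b' : ℝ, a ≤ a' ∧ a' < b' ∧ b' ≤ b ∧ ∃ C : ℝ, 0 < C ∧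
      ∀ p : Fin m → ℝ, p ≠ 0 → ∀ δ : ℝ, 0 < δ →
        volume {s ∈ Set.Icc a' b' |
            |∑ i, p i * iteratedDerivWithin 1 f (Set.Icc a b) s i| ≤ δ} ≤
          ENNReal.ofReal (C * (δ / euclNorm p) ^ (((m : ℝ) - 1)⁻¹)) := by
  set I := Icc a b
  have hI : UniqueDiffOn ℝ I := uniqueDiffOn_Icc hab
  have hN : ContinuousOn (fun t => Matrix.of fun i j : Fin m =>
      iteratedDerivWithin ((j : ℕ) + 1) f I t i) I :=
    continuousOn_pi.2 fun i => continuousOn_pi.2 fun j => continuousOn_pi.1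
      (hf.continuousOn_iteratedDerivWithin (m := (j : ℕ) + 1) (by exact_mod_cast j.isLt) hI) i
  have hdet : (Matrix.of fun i j : Fin m => iteratedDerivWithin ((j : ℕ) + 1) f I a i).det ≠ 0 :=
    fun h0 => by
      have := hWron a (left_mem_Icc.2 hab.le)
      rw [h0, abs_zero] at this
      linarith
  obtain ⟨b', ⟨hab', hb'b⟩, c, hc, hdom⟩ := exists_forall_mul_norm_le_abs_vecMul_apply hab hN hdet
  have hsub : Icc a b' ⊆ I := Icc_subset_Icc_right hb'b
  set e : ℝ := ((m : ℝ) - 1)⁻¹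
  have hsqrt : 0 < √(m : ℝ) := Real.sqrt_pos.2 (by positivity)
  set c' := c / √m with hc'_def
  have hc' : 0 < c' := div_pos hc hsqrt
  refine ⟨a, b', le_rfl, hab', hb'b, (b' - a + 4 ^ (m - 1)) / c' ^ e, by positivity,
    fun p hp δ hδ => ?_⟩
  obtain ⟨j, hj⟩ := hdom p hp
  have hp' : 0 < euclNorm p := euclNorm_pos hp
  have hlow : ∀ s ∈ Icc a b', c' * euclNorm p ≤ |p ⬝ᵥ iteratedDerivWithin (j + 1) f I s| :=
    fun s hs => calc
      c' * euclNorm p ≤ c' * (√m * ‖p‖) := by gcongr; exact euclNorm_le_sqrt_mul_norm p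
      _ = c * ‖p‖ := by rw [hc'_def, ← mul_assoc, div_mul_cancel₀ _ hsqrt.ne']
      _ ≤ _ := hj s hs
  have hbound := volume_sublevel_le_of_hasDerivWithinAt_chain_of_le
    (fun k s => p ⬝ᵥ iteratedDerivWithin (k + 1) f I s) (n := m - 1) (by omega) (by omega)
    hab'.le (mul_pos hc' hp') hδ
    (fun k hk s hs => ((hf.hasDerivWithinAt_iteratedDerivWithin (by norm_cast; omega) hI
      (hsub hs)).const_dotProduct p).mono hsub) hlow
  have he : ((m - 1 : ℕ) : ℝ)⁻¹ = e := by rw [Nat.cast_sub (by omega), Nat.cast_one]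
  rw [he, mul_comm c', ← div_div, Real.div_rpow (div_pos hδ hp').le hc'.le] at hbound
  exact hbound.trans_eq (congrArg ENNReal.ofReal (by ring))

theorem stmt_7 (m : ℕ) (hm : 2 ≤ m) (a b : ℝ) (hab : a < b) (f : ℝ → Fin m → ℝ)
    (hf : ContDiffOn ℝ (m : ℕ∞) f (Set.Icc a b))
    (w : ℝ) (hw : 0 < w)
    (hWron : ∀ t ∈ Set.Icc a b,
      w ≤ |(Matrix.of fun i j : Fin m =>
        iteratedDerivWithin ((j : ℕ) + 1) f (Set.Icc a b) t i).det|)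
    (hbdd : ∀ k : ℕ, 1 ≤ k → k ≤ m → ∃ M : ℝ, ∀ t ∈ Set.Icc a b,
      euclNorm (iteratedDerivWithin k f (Set.Icc a b) t) ≤ M) :
    ∃ a' b' : ℝ, a ≤ a' ∧ a' < b' ∧ b' ≤ b ∧ ∃ C : ℝ, 0 < C ∧
      ∀ p : Fin m → ℝ, p ≠ 0 → ∀ δ : ℝ, 0 < δ →
        volume {s ∈ Set.Icc a' b' |
            |∑ i, p i * iteratedDerivWithin 1 f (Set.Icc a b) s i| ≤ δ} ≤
          ENNReal.ofReal (C * (δ / euclNorm p) ^ (((m : ℝ) - 1)⁻¹)) :=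
  stmt_7_general m hm a b hab f hf w hw hWron
end

section
/- Suppose the m×n real matrix α is nonsingular in the Diophantine sense: it is NOT the case that for every ε > 0 there exists Q_ε ≥ 1 such that for all Q ≥ Q_ε there exists (p,q) ∈ ℤ^m × ℤ^n with ‖αq + p‖ ≤ ε Q^{−n/m} and 0 < ‖q‖ ≤ Q. Then there exists ε > 0 such that for infinitely many Q in {2^k : k ∈ ℕ}, the only point of the dual lattice Λ_Q* = ((g_Q u_α)^T)^{−1} ℤ^{m+n} in the box {(p,q) : ‖p‖ ≤ 2ε, ‖q‖ ≤ 2C₁} is the origin, for any fixed constant C₁ ≥ 1. -/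
/-!
Transference via Minkowski's theorem. With `B = g_Q u_α`, the lattice `Λ_Q = B ℤ^{m+n}` is
unimodular and `Λ_Q* = B^{-T} ℤ^{m+n}` pairs integrally with it. If `Λ_Q*` contains a very short
vector `w`, Minkowski's theorem applied to a cylinder of height `(2‖w‖)⁻¹` along `w` and small
width across it gives a nonzero `x ∈ Λ_Q` with `|⟪w, x⟫| ≤ 1/2`; being an integer, `⟪w, x⟫ = 0`,
so `x` lies in the thin part of the cylinder and is short. Such an `x = B (p', q')` is a
Dirichlet solution at scale `Q`, and `q' ≠ 0` because a nonzero `Q^{n/m} p'` has norm `≥ 1`.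

Choose a scale `Q` at which `α` has no Dirichlet solution and `2^k ∈ (TQ, 2TQ]` with `T` large:
a dual point in the box at scale `2^k` with `p ≠ 0` becomes a very short dual vector at scale
`Q`, which is impossible; and `p = 0` forces `‖2^k q‖ ≤ 2C₁ < 2^k`, so `q = 0`.
-/

open MeasureTheory Matrix

lemma euclNorm_eq_norm {k : ℕ} (v : Fin k → ℝ) : euclNorm v = ‖WithLp.toLp 2 v‖ := by
  simp [euclNorm, EuclideanSpace.norm_eq]

lemma euclNorm_nonneg {k : ℕ} (v : Fin k → ℝ) : 0 ≤ euclNorm v := Real.sqrt_nonneg _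

lemma euclNorm_mul_left {k : ℕ} (t : ℝ) (v : Fin k → ℝ) :
    euclNorm (fun i => t * v i) = |t| * euclNorm v := by
  rw [euclNorm_eq_norm, euclNorm_eq_norm, ← Real.norm_eq_abs, ← norm_smul]
  rfl

lemma one_le_euclNorm_of_ne_zero {k : ℕ} {z : Fin k → ℤ} (hz : z ≠ 0) :
    1 ≤ euclNorm fun i => (z i : ℝ) := by
  obtain ⟨j, hj⟩ := Function.ne_iff.mp hz
  have h1 : (1 : ℝ) ≤ |(z j : ℝ)| := by exact_mod_cast Int.one_le_abs hj
  refine h1.trans ?_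
  rw [euclNorm_eq_norm]
  exact PiLp.norm_apply_le (WithLp.toLp 2 fun i => (z i : ℝ)) j

lemma eq_zero_of_euclNorm_mul_lt {k : ℕ} {z : Fin k → ℤ} {t : ℝ} (ht : 0 ≤ t)
    (h : euclNorm (fun i => t * (z i : ℝ)) < t) : z = 0 := by
  by_contra hz
  rw [euclNorm_mul_left, abs_of_nonneg ht] at h
  nlinarith [one_le_euclNorm_of_ne_zero hz]

lemma norm_toLp_sumElim {k l : ℕ} (a : Fin k → ℝ) (b : Fin l → ℝ) :
    ‖WithLp.toLp 2 (Sum.elim a b)‖ = √(euclNorm a ^ 2 + euclNorm b ^ 2) := by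
  rw [EuclideanSpace.norm_eq, euclNorm, euclNorm, Real.sq_sqrt (by positivity),
    Real.sq_sqrt (by positivity), Fintype.sum_sum_type]
  simp

lemma euclNorm_left_le_norm_toLp_sumElim {k l : ℕ} (a : Fin k → ℝ) (b : Fin l → ℝ) :
    euclNorm a ≤ ‖WithLp.toLp 2 (Sum.elim a b)‖ := by
  rw [norm_toLp_sumElim, Real.le_sqrt (euclNorm_nonneg a) (by positivity)]
  nlinarith [sq_nonneg (euclNorm b)]

lemma euclNorm_right_le_norm_toLp_sumElim {k l : ℕ} (a : Fin k → ℝ) (b : Fin l → ℝ) :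
    euclNorm b ≤ ‖WithLp.toLp 2 (Sum.elim a b)‖ := by
  rw [norm_toLp_sumElim, Real.le_sqrt (euclNorm_nonneg b) (by positivity)]
  nlinarith [sq_nonneg (euclNorm a)]

lemma norm_toLp_sumElim_le {k l : ℕ} (a : Fin k → ℝ) (b : Fin l → ℝ) :
    ‖WithLp.toLp 2 (Sum.elim a b)‖ ≤ euclNorm a + euclNorm b := by
  rw [norm_toLp_sumElim, Real.sqrt_le_left (add_nonneg (euclNorm_nonneg a) (euclNorm_nonneg b))]
  nlinarith [euclNorm_nonneg a, euclNorm_nonneg b]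

theorem exists_int_ne_zero_abs_repr_mulVec_le {ι : Type*} [Fintype ι] [DecidableEq ι]
    (B : Matrix ι ι ℝ) (hB : B.det ≠ 0) (b : OrthonormalBasis ι ℝ (EuclideanSpace ℝ ι))
    (g : ι → ℝ) (hg : ∀ i, 0 ≤ g i) (hvol : 2 ^ Fintype.card ι * |B.det| < ∏ i, 2 * g i) :
    ∃ z : ι → ℤ, z ≠ 0 ∧
      ∀ i, |b.repr (WithLp.toLp 2 (B *ᵥ fun i => (z i : ℝ))) i| ≤ g i := by
  set M : (ι → ℝ) →ₗ[ℝ] (ι → ℝ) :=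
    (WithLp.linearEquiv 2 ℝ (ι → ℝ)).toLinearMap ∘ₗ b.repr.toLinearMap ∘ₗ
      (WithLp.linearEquiv 2 ℝ (ι → ℝ)).symm.toLinearMap
  set f := M ∘ₗ toLin' B
  set box : Set (ι → ℝ) := Set.univ.pi fun i => Set.Icc (-g i) (g i)
  have hsymm : ∀ x ∈ f ⁻¹' box, -x ∈ f ⁻¹' box := by
    intro x hx i _
    rw [map_neg]
    exact ⟨neg_le_neg (hx i trivial).2, neg_le.mp (hx i trivial).1⟩
  have hmp : MeasurePreserving M :=
    (PiLp.volume_preserving_ofLp ι).comp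
      (b.measurePreserving_repr.comp (PiLp.volume_preserving_toLp ι))
  have hvolS : volume (f ⁻¹' box) = ENNReal.ofReal |B.det|⁻¹ * ∏ i, ENNReal.ofReal (2 * g i) := by
    rw [LinearMap.coe_comp, Set.preimage_comp,
      Measure.addHaar_preimage_linearMap _ (by rwa [LinearMap.det_toLin']),
      LinearMap.det_toLin', abs_inv]
    congr 1
    rw [hmp.measure_preimage (MeasurableSet.univ_pi fun i => measurableSet_Icc).nullMeasurableSet]
    simp only [volume_pi_pi, Real.volume_Icc, sub_neg_eq_add, two_mul]
  have : Countable (Submodule.span ℤ (Set.range (Pi.basisFun ℝ ι))).toAddSubgroup :=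
    (inferInstance : Countable (Submodule.span ℤ (Set.range (Pi.basisFun ℝ ι))))
  obtain ⟨⟨x, hxL⟩, hx0, hx⟩ := exists_ne_zero_mem_lattice_of_measure_mul_two_pow_lt_measure
    (ZSpan.isAddFundamentalDomain' (Pi.basisFun ℝ ι) volume) hsymm
    ((convex_pi fun i _ => convex_Icc _ _).linear_preimage f) (by
      have hcube : volume (ZSpan.fundamentalDomain (Pi.basisFun ℝ ι)) = 1 := by
        simp [ZSpan.fundamentalDomain_pi_basisFun, volume_pi_pi]
      rw [hvolS, hcube, Module.finrank_fintype_fun_eq_card,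
        ← ENNReal.ofReal_prod_of_nonneg fun i _ => by linarith [hg i],
        ← ENNReal.ofReal_mul (by positivity), one_mul,
        show (2 : ENNReal) ^ Fintype.card ι = ENNReal.ofReal (2 ^ Fintype.card ι) by simp,
        ENNReal.ofReal_lt_ofReal_iff_of_nonneg (by positivity), ← div_eq_inv_mul,
        lt_div_iff₀ (abs_pos.mpr hB)]
      exact hvol)
  choose z hz using (Pi.basisFun ℝ ι).mem_span_iff_repr_mem ℤ x |>.mp hxL
  obtain rfl : x = fun i => (z i : ℝ) := funext fun i => (hz i).symm
  refine ⟨z, fun h => hx0 ?_, fun i => abs_le.mpr (hx i trivial)⟩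
  subst h
  ext i
  simp

theorem exists_int_ne_zero_norm_mulVec_le_of_dual {ι : Type*} [Fintype ι] [DecidableEq ι]
    (B : Matrix ι ι ℝ) (hB : B.det ≠ 0) {v : ι → ℤ} (hv : v ≠ 0) {w : EuclideanSpace ℝ ι}
    (hw : Bᵀ *ᵥ w.ofLp = fun i => (v i : ℝ)) {r : ℝ} (hr : 0 ≤ r)
    (h : 2 ^ Fintype.card ι * |B.det| * ‖w‖ < (2 * r) ^ (Fintype.card ι - 1)) :
    ∃ z : ι → ℤ, z ≠ 0 ∧
      ‖WithLp.toLp 2 (B *ᵥ fun i => (z i : ℝ))‖ ≤ √(Fintype.card ι) * r := by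
  obtain ⟨i₀, -⟩ : ∃ i, v i ≠ 0 := Function.ne_iff.mp hv
  have hw0 : 0 < ‖w‖ := by
    refine norm_pos_iff.mpr fun h0 => hv (funext fun i => ?_)
    simpa [h0] using (congrFun hw i).symm
  obtain ⟨b, hb⟩ : ∃ b : OrthonormalBasis ι ℝ (EuclideanSpace ℝ ι),
      ∀ i ∈ ({i₀} : Set ι), b i = ‖w‖⁻¹ • w :=
    Orthonormal.exists_orthonormalBasis_extension_of_card_eq (by simp)
      ⟨fun _ => by simp [norm_smul, hw0.ne'], fun i j hij => (hij (Subsingleton.elim i j)).elim⟩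
  -- the cylinder of height `(2‖w‖)⁻¹` along `b i₀ = w / ‖w‖` and half-width `r` across it
  set g : ι → ℝ := Function.update (fun _ => r) i₀ (2 * ‖w‖)⁻¹
  have hg₀ : g i₀ = (2 * ‖w‖)⁻¹ := Function.update_self ..
  have hg : ∀ i ≠ i₀, g i = r := fun i hi => Function.update_of_ne hi ..
  have hprod : ∏ i, 2 * g i = ‖w‖⁻¹ * (2 * r) ^ (Fintype.card ι - 1) := by
    rw [← Finset.mul_prod_erase _ _ (Finset.mem_univ i₀),
      Finset.prod_congr rfl fun i hi => by rw [hg i (Finset.ne_of_mem_erase hi)],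
      Finset.prod_const, Finset.card_erase_of_mem (Finset.mem_univ _), Finset.card_univ, hg₀]
    field_simp
  obtain ⟨z, hz0, hz⟩ := exists_int_ne_zero_abs_repr_mulVec_le B hB b g
    (fun i => by rcases eq_or_ne i i₀ with rfl | hi <;> simp [*])
    (by rw [hprod, ← div_eq_inv_mul, lt_div_iff₀ hw0]; exact h)
  set x := WithLp.toLp 2 (B *ᵥ fun i => (z i : ℝ))
  have hinner : inner ℝ w x = ((v ⬝ᵥ z : ℤ) : ℝ) := by
    rw [EuclideanSpace.inner_eq_star_dotProduct, star_trivial, dotProduct_comm, dotProduct_mulVec,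
      ← mulVec_transpose, hw]
    simp [dotProduct]
  have hrepr : b.repr x i₀ = ‖w‖⁻¹ * ((v ⬝ᵥ z : ℤ) : ℝ) := by
    rw [OrthonormalBasis.repr_apply_apply, hb i₀ rfl, real_inner_smul_left, hinner]
  have hdot : v ⬝ᵥ z = 0 := by
    have h := hz i₀
    rw [hrepr, hg₀, abs_mul, abs_inv, abs_norm, mul_inv, mul_comm 2⁻¹,
      mul_le_mul_iff_right₀ (inv_pos.mpr hw0)] at h
    have h1 : |((v ⬝ᵥ z : ℤ) : ℝ)| < 1 := h.trans_lt (by norm_num)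
    exact Int.abs_lt_one_iff.mp (by exact_mod_cast h1)
  have hbound : ∀ i, |b.repr x i| ≤ r := fun i => by
    rcases eq_or_ne i i₀ with rfl | hi
    · simp [hrepr, hdot, hr]
    · exact hg i hi ▸ hz i
  refine ⟨z, hz0, ?_⟩
  calc ‖x‖ ≤ √(Fintype.card ι) * ⨆ i, ‖inner ℝ (b i) x‖ := b.norm_le_card_mul_iSup_norm_inner x
    _ ≤ √(Fintype.card ι) * r := by
      have : Nonempty ι := ⟨i₀⟩
      gcongr
      exact ciSup_le fun i => by simpa [b.repr_apply_apply] using hbound i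

/-- The matrix `g_Q u_α`. -/
noncomputable def dirichletLatticeMatrix {m n : ℕ} (α : Matrix (Fin m) (Fin n) ℝ) (Q : ℝ) :
    Matrix (Fin m ⊕ Fin n) (Fin m ⊕ Fin n) ℝ :=
  fromBlocks (Q ^ ((n : ℝ) / m) • 1) (Q ^ ((n : ℝ) / m) • α) 0 (Q⁻¹ • 1)

section

variable {m n : ℕ} (α : Matrix (Fin m) (Fin n) ℝ) {Q : ℝ}

lemma det_dirichletLatticeMatrix (hm : m ≠ 0) (hQ : 0 < Q) :
    (dirichletLatticeMatrix α Q).det = 1 := by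
  rw [dirichletLatticeMatrix, det_fromBlocks_zero₂₁, det_smul, det_smul, det_one, det_one,
    mul_one, mul_one, Fintype.card_fin, Fintype.card_fin, ← Real.rpow_natCast,
    ← Real.rpow_mul hQ.le, div_mul_cancel₀ _ (by exact_mod_cast hm), Real.rpow_natCast,
    inv_pow, mul_inv_cancel₀ (pow_ne_zero _ hQ.ne')]

lemma dirichletLatticeMatrix_mulVec (a : Fin m → ℝ) (b : Fin n → ℝ) :
    dirichletLatticeMatrix α Q *ᵥ Sum.elim a b =
      Sum.elim (Q ^ ((n : ℝ) / m) • (a + α *ᵥ b)) (Q⁻¹ • b) := by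
  simp [dirichletLatticeMatrix, fromBlocks_mulVec, smul_mulVec, smul_add]

lemma transpose_dirichletLatticeMatrix_mulVec (hQ : 0 < Q) (p : Fin m → ℝ) (q : Fin n → ℝ) :
    (dirichletLatticeMatrix α Q)ᵀ *ᵥ
      Sum.elim (fun i => Q ^ (-(n : ℝ) / m) * p i) (fun j => Q * (q j - (αᵀ *ᵥ p) j)) =
      Sum.elim p q := by
  have hQn : Q ^ (-(n : ℝ) / m) * Q ^ ((n : ℝ) / m) = 1 := by
    rw [← Real.rpow_add hQ, neg_div, neg_add_cancel, Real.rpow_zero]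
  ext (i | j)
  · simp [dirichletLatticeMatrix, fromBlocks_transpose, fromBlocks_mulVec, smul_mulVec,
      mul_left_comm _ (Q ^ (-(n : ℝ) / m)), ← mul_assoc, hQn]
  · rw [show (fun i => Q ^ (-(n : ℝ) / m) * p i) = Q ^ (-(n : ℝ) / m) • p from rfl]
    simp [dirichletLatticeMatrix, fromBlocks_transpose, fromBlocks_mulVec, smul_mulVec,
      mulVec_smul, smul_smul, hQn, hQ.ne']

end

theorem exists_dirichlet_solution_of_dual_small {m n : ℕ} (α : Matrix (Fin m) (Fin n) ℝ)
    {ε : ℝ} (hε : 0 < ε) (hε1 : ε < 1) :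
    ∃ δ > 0, ∀ Q : ℝ, 1 ≤ Q → ∀ (p : Fin m → ℤ) (q : Fin n → ℤ), p ≠ 0 →
      euclNorm (fun i => Q ^ (-(n : ℝ) / m) * (p i : ℝ)) +
        euclNorm (fun j => Q * ((q j : ℝ) - (αᵀ *ᵥ fun i => (p i : ℝ)) j)) ≤ δ →
      ∃ (p' : Fin m → ℤ) (q' : Fin n → ℤ),
        euclNorm (α *ᵥ (fun j => (q' j : ℝ)) + fun i => (p' i : ℝ)) ≤
          ε * Q ^ (-(n : ℝ) / m) ∧
        0 < euclNorm (fun j => (q' j : ℝ)) ∧ euclNorm (fun j => (q' j : ℝ)) ≤ Q := by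
  set d := Fintype.card (Fin m ⊕ Fin n)
  set r := ε / √d
  have hδ : 0 < (2 * r) ^ (d - 1) / 2 ^ (d + 1) := by
    rcases Nat.eq_zero_or_pos d with hd | hd
    · simp [hd]
    · have : 0 < r := div_pos hε (Real.sqrt_pos.mpr (by exact_mod_cast hd))
      positivity
  refine ⟨_, hδ, fun Q hQ p q hp hsmall => ?_⟩
  have hm : m ≠ 0 := by rintro rfl; exact hp (Subsingleton.elim _ _)
  have hQ0 : 0 < Q := by linarith
  set w := WithLp.toLp 2 (Sum.elim (fun i => Q ^ (-(n : ℝ) / m) * (p i : ℝ))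
    (fun j => Q * ((q j : ℝ) - (αᵀ *ᵥ fun i => (p i : ℝ)) j)))
  have hdet := det_dirichletLatticeMatrix α hm hQ0
  obtain ⟨z, hz0, hz⟩ := exists_int_ne_zero_norm_mulVec_le_of_dual
    (dirichletLatticeMatrix α Q) (by rw [hdet]; exact one_ne_zero)
    (v := Sum.elim p q) (fun h => hp (funext fun i => congrFun h (Sum.inl i))) (w := w)
    (transpose_dirichletLatticeMatrix_mulVec α hQ0 _ _ |>.trans (by ext (i | j) <;> rfl))
    (r := r) (by positivity) (by
      rw [hdet, abs_one, mul_one]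
      have hpos := (div_pos_iff_of_pos_right (by positivity)).mp hδ
      calc 2 ^ d * ‖w‖ ≤ 2 ^ d * ((2 * r) ^ (d - 1) / 2 ^ (d + 1)) :=
            mul_le_mul_of_nonneg_left ((norm_toLp_sumElim_le _ _).trans hsmall) (by positivity)
        _ < (2 * r) ^ (d - 1) := by rw [pow_succ]; field_simp; linarith)
  set zp : Fin m → ℝ := fun i => (z (Sum.inl i) : ℝ)
  set zq : Fin n → ℝ := fun j => (z (Sum.inr j) : ℝ)
  have hBz : dirichletLatticeMatrix α Q *ᵥ (fun i => (z i : ℝ)) =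
      Sum.elim (Q ^ ((n : ℝ) / m) • (zp + α *ᵥ zq)) (Q⁻¹ • zq) :=
    dirichletLatticeMatrix_mulVec α zp zq ▸ congrArg _ (Sum.elim_comp_inl_inr _).symm
  have hε' : √d * r = ε := by
    have hd : 0 < d := by simp only [d, Fintype.card_sum, Fintype.card_fin]; omega
    rw [mul_div_cancel₀ _ (Real.sqrt_pos.mpr (Nat.cast_pos.mpr hd)).ne']
  rw [hBz, hε'] at hz
  have hp' := (euclNorm_left_le_norm_toLp_sumElim _ _).trans hz
  have hq' := (euclNorm_right_le_norm_toLp_sumElim _ _).trans hz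
  rw [show Q ^ ((n : ℝ) / m) • (zp + α *ᵥ zq) = fun i => Q ^ ((n : ℝ) / m) * (zp + α *ᵥ zq) i
    from rfl, euclNorm_mul_left] at hp'
  rw [show Q⁻¹ • zq = fun j => Q⁻¹ * zq j from rfl, euclNorm_mul_left] at hq'
  have hQa : 1 ≤ Q ^ ((n : ℝ) / m) := Real.one_le_rpow hQ (by positivity)
  rw [abs_of_pos (by positivity)] at hp' hq'
  have hzq : (fun j => z (Sum.inr j)) ≠ 0 := by
    intro hzq
    have hzp : (fun i => z (Sum.inl i)) ≠ 0 := fun hzp =>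
      hz0 (funext fun i => i.casesOn (congrFun hzp) (congrFun hzq))
    have hzq0 : zq = 0 := funext fun j => by simp [zq, congrFun hzq j]
    rw [hzq0, mulVec_zero, add_zero] at hp'
    nlinarith [one_le_euclNorm_of_ne_zero hzp]
  refine ⟨fun i => z (Sum.inl i), fun j => z (Sum.inr j), ?_,
    zero_lt_one.trans_le (one_le_euclNorm_of_ne_zero hzq), ?_⟩
  · rw [add_comm, neg_div, Real.rpow_neg hQ0.le, ← div_eq_mul_inv, le_div_iff₀ (by positivity)]
    linarith
  · rw [inv_mul_le_iff₀ hQ0] at hq'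
    nlinarith

lemma euclNorm_rpow_neg_mul_le {k : ℕ} (u : Fin k → ℝ) {a c Q Q' : ℝ} (ha : 0 ≤ a)
    (hQ : 0 < Q) (hQ' : 0 < Q') (hQQ' : Q' ≤ c * Q) :
    euclNorm (fun i => Q ^ (-a) * u i) ≤ c ^ a * euclNorm (fun i => Q' ^ (-a) * u i) := by
  have hc : 0 < c := pos_of_mul_pos_left (hQ'.trans_le hQQ') hQ.le
  rw [euclNorm_mul_left, euclNorm_mul_left, abs_of_pos (by positivity),
    abs_of_pos (by positivity), ← mul_assoc]
  refine mul_le_mul_of_nonneg_right ?_ (euclNorm_nonneg u)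
  rw [Real.rpow_neg hQ.le, Real.rpow_neg hQ'.le, ← div_eq_mul_inv,
    inv_le_iff_one_le_mul₀ (by positivity), div_mul_eq_mul_div, le_div_iff₀ (by positivity),
    one_mul, ← Real.mul_rpow hc.le hQ.le]
  exact Real.rpow_le_rpow hQ'.le hQQ' ha

lemma euclNorm_mul_le_inv_mul {k : ℕ} (v : Fin k → ℝ) {T Q Q' : ℝ} (hT : 0 < T) (hQ : 0 ≤ Q)
    (hQQ' : T * Q ≤ Q') :
    euclNorm (fun i => Q * v i) ≤ T⁻¹ * euclNorm (fun i => Q' * v i) := by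
  rw [euclNorm_mul_left, euclNorm_mul_left, abs_of_nonneg hQ,
    abs_of_nonneg (hQQ'.trans' (by positivity)), ← mul_assoc]
  refine mul_le_mul_of_nonneg_right ?_ (euclNorm_nonneg v)
  rw [le_inv_mul_iff₀ hT]
  exact hQQ'

lemma euclNorm_add_euclNorm_le_of_rescale {k l : ℕ} (u : Fin k → ℝ) (v : Fin l → ℝ)
    {a δ C T Q Q' : ℝ} (ha : 0 ≤ a) (hδ : 0 < δ) (hT : 1 ≤ T) (hTC : 4 * C / δ ≤ T)
    (hQ : 0 < Q) (hlo : T * Q ≤ Q') (hhi : Q' ≤ 2 * T * Q)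
    (hu : euclNorm (fun i => Q' ^ (-a) * u i) ≤ 2 * (δ / (4 * (2 * T) ^ a)))
    (hv : euclNorm (fun j => Q' * v j) ≤ 2 * C) :
    euclNorm (fun i => Q ^ (-a) * u i) + euclNorm (fun j => Q * v j) ≤ δ := by
  have hu' : (2 * T) ^ a * (2 * (δ / (4 * (2 * T) ^ a))) = δ / 2 := by
    field_simp
    ring
  have hv' : T⁻¹ * (2 * C) ≤ δ / 2 := by
    rw [inv_mul_le_iff₀ (by linarith)]
    linarith [(div_le_iff₀ hδ).mp hTC]
  calc _ ≤ (2 * T) ^ a * (2 * (δ / (4 * (2 * T) ^ a))) + T⁻¹ * (2 * C) :=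
        add_le_add
          ((euclNorm_rpow_neg_mul_le u ha hQ (by nlinarith) hhi).trans
            (mul_le_mul_of_nonneg_left hu (by positivity)))
          ((euclNorm_mul_le_inv_mul v (by linarith) hQ.le hlo).trans
            (mul_le_mul_of_nonneg_left hv (by positivity)))
    _ ≤ δ := by linarith

lemma exists_two_pow_mem_Ioc {x : ℝ} (hx : 1 ≤ x) : ∃ k : ℕ, x < 2 ^ k ∧ (2 : ℝ) ^ k ≤ 2 * x := by
  obtain ⟨k, hk, hk'⟩ := exists_nat_pow_near hx one_lt_two
  exact ⟨k + 1, hk', by rw [pow_succ']; linarith⟩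

theorem stmt_10_general (m n : ℕ) (α : Matrix (Fin m) (Fin n) ℝ)
    -- `α` is nonsingular in the Diophantine sense
    (hns : ¬ (∀ ε : ℝ, 0 < ε → ∃ Qe : ℝ, 1 ≤ Qe ∧ ∀ Q : ℝ, Qe ≤ Q →
      ∃ (p : Fin m → ℤ) (q : Fin n → ℤ),
        euclNorm (α.mulVec (fun j => (q j : ℝ)) + (fun i => (p i : ℝ))) ≤
          ε * Q ^ (-(n : ℝ) / (m : ℝ)) ∧
        0 < euclNorm (fun j => (q j : ℝ)) ∧ euclNorm (fun j => (q j : ℝ)) ≤ Q))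
    (C₁ : ℝ) :
    -- then for some `ε > 0`, for infinitely many `Q = 2^k`, the only point of the
    -- dual lattice `Λ_Q* ∋ (Q^{-n/m} p, Q(q - αᵀp))` in the box
    -- `‖·‖ ≤ 2ε` × `‖·‖ ≤ 2C₁` is the origin.
    ∃ ε : ℝ, 0 < ε ∧ ∀ N : ℕ, ∃ k : ℕ, N ≤ k ∧
      ∀ (p : Fin m → ℤ) (q : Fin n → ℤ),
        euclNorm (fun i => ((2 : ℝ) ^ k) ^ (-(n : ℝ) / (m : ℝ)) * (p i : ℝ)) ≤ 2 * ε →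
        euclNorm (fun j => (2 : ℝ) ^ k *
            ((q j : ℝ) - α.transpose.mulVec (fun i => (p i : ℝ)) j)) ≤ 2 * C₁ →
        p = 0 ∧ q = 0 := by
  push Not at hns
  obtain ⟨ε₀, hε₀, hbad⟩ := hns
  obtain ⟨δ, hδ, htransfer⟩ := exists_dirichlet_solution_of_dual_small α
    (lt_min hε₀ one_half_pos) (min_lt_of_right_lt one_half_lt_one)
  set a : ℝ := n / m
  set T : ℝ := max 1 (4 * C₁ / δ)
  have hT : 1 ≤ T := le_max_left _ _
  refine ⟨δ / (4 * (2 * T) ^ a), by positivity, fun N => ?_⟩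
  have h2N : (1 : ℝ) ≤ max (2 ^ N) (2 * C₁) := le_max_of_le_left (one_le_pow₀ one_le_two)
  obtain ⟨Q, hQN, hQbad⟩ := hbad _ h2N
  have hQ : 1 ≤ Q := h2N.trans hQN
  obtain ⟨k, hk_lo, hk_hi⟩ := exists_two_pow_mem_Ioc (one_le_mul_of_one_le_of_one_le hT hQ)
  have hQk : Q < 2 ^ k := lt_of_le_of_lt (le_mul_of_one_le_left (by linarith) hT) hk_lo
  refine ⟨k, (pow_le_pow_iff_right₀ one_lt_two).mp ((le_max_left _ _).trans (hQN.trans hQk.le)),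
    fun p q hp hq => ?_⟩
  rcases eq_or_ne p 0 with rfl | hp0
  · have hq' : euclNorm (fun j => (2 : ℝ) ^ k * (q j : ℝ)) ≤ 2 * C₁ := by
      simpa [← Pi.zero_def] using hq
    exact ⟨rfl, eq_zero_of_euclNorm_mul_lt (by positivity)
      (hq'.trans_lt ((le_max_right _ _).trans hQN |>.trans_lt hQk))⟩
  · rw [neg_div] at hp
    obtain ⟨p', q', h1, h2, h3⟩ := htransfer Q hQ p q hp0 (by
      simpa only [neg_div] using euclNorm_add_euclNorm_le_of_rescale _ _ (by positivity) hδ hT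
        (le_max_right _ _) (by linarith) hk_lo.le (by linarith) hp hq)
    exact absurd h3 (hQbad p' q' (h1.trans (by gcongr; exact min_le_left _ _)) h2).not_ge

theorem stmt_10 (m n : ℕ) (hm : 0 < m) (hn : 0 < n) (α : Matrix (Fin m) (Fin n) ℝ)
    -- `α` is nonsingular in the Diophantine sense
    (hns : ¬ (∀ ε : ℝ, 0 < ε → ∃ Qe : ℝ, 1 ≤ Qe ∧ ∀ Q : ℝ, Qe ≤ Q →
      ∃ (p : Fin m → ℤ) (q : Fin n → ℤ),
        euclNorm (α.mulVec (fun j => (q j : ℝ)) + (fun i => (p i : ℝ))) ≤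
          ε * Q ^ (-(n : ℝ) / (m : ℝ)) ∧
        0 < euclNorm (fun j => (q j : ℝ)) ∧ euclNorm (fun j => (q j : ℝ)) ≤ Q))
    (C₁ : ℝ) (hC₁ : 1 ≤ C₁) :
    -- then for some `ε > 0`, for infinitely many `Q = 2^k`, the only point of the
    -- dual lattice `Λ_Q* ∋ (Q^{-n/m} p, Q(q - αᵀp))` in the box
    -- `‖·‖ ≤ 2ε` × `‖·‖ ≤ 2C₁` is the origin.
    ∃ ε : ℝ, 0 < ε ∧ ∀ N : ℕ, ∃ k : ℕ, N ≤ k ∧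
      ∀ (p : Fin m → ℤ) (q : Fin n → ℤ),
        euclNorm (fun i => ((2 : ℝ) ^ k) ^ (-(n : ℝ) / (m : ℝ)) * (p i : ℝ)) ≤ 2 * ε →
        euclNorm (fun j => (2 : ℝ) ^ k *
            ((q j : ℝ) - α.transpose.mulVec (fun i => (p i : ℝ)) j)) ≤ 2 * C₁ →
        p = 0 ∧ q = 0 :=
  stmt_10_general m n α hns C₁
end

section
/- Let α be a very singular m×n matrix with exponent ε > 0 (i.e. ‖αq + p‖ ≤ Q^{−(n/m+ε)} and 0 < ‖q‖ ≤ Q is solvable in integers for all large Q). Let δ > 0 satisfy δ·n/m − ε ≤ −δ. Then for all sufficiently large Q, the lattice Λ_{Q^{1+δ}} = g_{Q^{1+δ}} u_α ℤ^{m+n} contains a nonzero vector of norm ≲ Q^{−δ}; consequently λ₁(Λ_{Q^{1+δ}}) ≲ Q^{−δ}. -/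
open Real

lemma euclNorm_const_mul {k : ℕ} (c : ℝ) (v : Fin k → ℝ) :
    euclNorm (fun i => c * v i) = |c| * euclNorm v := by
  unfold euclNorm
  rw [← sqrt_sq_eq_abs, ← sqrt_mul (sq_nonneg c), Finset.mul_sum]
  exact congrArg sqrt (Finset.sum_congr rfl fun i _ => by ring)

lemma euclNorm_zero {k : ℕ} : euclNorm (0 : Fin k → ℝ) = 0 := by
  simp [euclNorm]

lemma rpow_mul_le_rpow_of_le {Q a b c x : ℝ} (hQ : 1 ≤ Q) (hx : x ≤ Q ^ a)
    (habc : b + a ≤ c) : Q ^ b * x ≤ Q ^ c := by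
  have hQ0 : 0 < Q := one_pos.trans_le hQ
  calc Q ^ b * x ≤ Q ^ b * Q ^ a := mul_le_mul_of_nonneg_left hx (rpow_nonneg hQ0.le b)
    _ = Q ^ (b + a) := (rpow_add hQ0 b a).symm
    _ ≤ Q ^ c := rpow_le_rpow_of_exponent_le hQ habc

theorem stmt_12_general (m n : ℕ) (α : Matrix (Fin m) (Fin n) ℝ)
    (ε Qε : ℝ)
    -- `α` is very singular with exponent `ε`
    (hsing : ∀ Q : ℝ, Qε ≤ Q → ∃ (p : Fin m → ℤ) (q : Fin n → ℤ),
      euclNorm (α.mulVec (fun j => (q j : ℝ)) + (fun i => (p i : ℝ))) ≤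
        Q ^ (-((n : ℝ) / (m : ℝ) + ε)) ∧
      0 < euclNorm (fun j => (q j : ℝ)) ∧ euclNorm (fun j => (q j : ℝ)) ≤ Q)
    (δ : ℝ) (hδε : δ * (n : ℝ) / (m : ℝ) - ε ≤ -δ) :
    -- then for all large `Q` the lattice `Λ_{Q^{1+δ}}`, with points
    -- `g_{Q^{1+δ}} u_α (p,q) = ((Q^{1+δ})^{n/m}(αq+p), (Q^{1+δ})⁻¹ q)`,
    -- contains a nonzero vector of norm `≲ Q^{-δ}`
    ∃ C : ℝ, 0 < C ∧ ∃ Q₀ : ℝ, 1 ≤ Q₀ ∧ ∀ Q : ℝ, Q₀ ≤ Q →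
      ∃ (p : Fin m → ℤ) (q : Fin n → ℤ), ¬(p = 0 ∧ q = 0) ∧
        euclNorm (fun i => (Q ^ ((1 : ℝ) + δ)) ^ ((n : ℝ) / (m : ℝ)) *
            (α.mulVec (fun j => (q j : ℝ)) i + (p i : ℝ))) ≤ C * Q ^ (-δ) ∧
        euclNorm (fun j => (Q ^ ((1 : ℝ) + δ))⁻¹ * (q j : ℝ)) ≤ C * Q ^ (-δ) := by
  refine ⟨1, one_pos, max Qε 1, le_max_right _ _, fun Q hQ => ?_⟩
  have hQ1 : 1 ≤ Q := (le_max_right _ _).trans hQ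
  have hQ0 : 0 < Q := one_pos.trans_le hQ1
  obtain ⟨p, q, hsmall, hq_pos, hq_le⟩ := hsing Q ((le_max_left _ _).trans hQ)
  have hq_ne : ¬(p = 0 ∧ q = 0) := by
    rintro ⟨-, rfl⟩
    simp only [Pi.zero_apply, Int.cast_zero] at hq_pos
    exact hq_pos.ne' euclNorm_zero
  refine ⟨p, q, hq_ne, ?_, ?_⟩
  · rw [euclNorm_const_mul, one_mul, ← rpow_mul hQ0.le, abs_of_nonneg (rpow_nonneg hQ0.le _)]
    refine rpow_mul_le_rpow_of_le hQ1 hsmall ?_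
    linarith [show (1 + δ) * (n / m : ℝ) = n / m + δ * n / m by ring]
  · rw [euclNorm_const_mul, one_mul, ← rpow_neg hQ0.le, abs_of_nonneg (rpow_nonneg hQ0.le _)]
    exact rpow_mul_le_rpow_of_le hQ1 (by rwa [rpow_one]) (by linarith)

theorem stmt_12 (m n : ℕ) (hm : 0 < m) (hn : 0 < n) (α : Matrix (Fin m) (Fin n) ℝ)
    (ε Qε : ℝ) (hε : 0 < ε) (hQε : 1 ≤ Qε)
    -- `α` is very singular with exponent `ε`
    (hsing : ∀ Q : ℝ, Qε ≤ Q → ∃ (p : Fin m → ℤ) (q : Fin n → ℤ),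
      euclNorm (α.mulVec (fun j => (q j : ℝ)) + (fun i => (p i : ℝ))) ≤
        Q ^ (-((n : ℝ) / (m : ℝ) + ε)) ∧
      0 < euclNorm (fun j => (q j : ℝ)) ∧ euclNorm (fun j => (q j : ℝ)) ≤ Q)
    (δ : ℝ) (hδ : 0 < δ) (hδε : δ * (n : ℝ) / (m : ℝ) - ε ≤ -δ) :
    -- then for all large `Q` the lattice `Λ_{Q^{1+δ}}`, with points
    -- `g_{Q^{1+δ}} u_α (p,q) = ((Q^{1+δ})^{n/m}(αq+p), (Q^{1+δ})⁻¹ q)`,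
    -- contains a nonzero vector of norm `≲ Q^{-δ}`
    ∃ C : ℝ, 0 < C ∧ ∃ Q₀ : ℝ, 1 ≤ Q₀ ∧ ∀ Q : ℝ, Q₀ ≤ Q →
      ∃ (p : Fin m → ℤ) (q : Fin n → ℤ), ¬(p = 0 ∧ q = 0) ∧
        euclNorm (fun i => (Q ^ ((1 : ℝ) + δ)) ^ ((n : ℝ) / (m : ℝ)) *
            (α.mulVec (fun j => (q j : ℝ)) i + (p i : ℝ))) ≤ C * Q ^ (-δ) ∧
        euclNorm (fun j => (Q ^ ((1 : ℝ) + δ))⁻¹ * (q j : ℝ)) ≤ C * Q ^ (-δ) :=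
  stmt_12_general m n α ε Qε hsing δ hδε
end

section
/- Let I ⊆ ℝ be an interval and (S'_Q)_{Q ∈ Q} a family of Lebesgue measurable subsets of ℝ indexed by a countable set Q ⊆ ℝ. Suppose there are constants C, c > 0 and finite subsets Q_k ⊆ Q ∩ [k,∞) such that for all sufficiently large k: (i) ∑_{Q ∈ Q_k} |S'_Q ∩ I|/|I| ≥ c, and (ii) ∑_{Q₁ < Q₂, Q₁,Q₂ ∈ Q_k} |S'_{Q₁} ∩ S'_{Q₂} ∩ I|/|I| ≤ C·(∑_{Q ∈ Q_k} |S'_Q ∩ I|/|I|)². Then |limsup_{Q→∞} S'_Q ∩ I|/|I| ≥ 1/(2C + c^{−1}). -/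
/-!
Write `ν = volume[|Icc a b]` for Lebesgue measure on `[a, b]` normalised to a probability measure.
For a finite family of events, Cauchy–Schwarz applied to `f = ∑ 𝟙_{A_i}`, which vanishes off
`⋃ A_i`, gives the Chung–Erdős inequality `(∑ ν A_i)² ≤ (∑_{i,j} ν (A_i ∩ A_j)) · ν (⋃ A_i)`.
With `s = ∑ ν A_i ≥ c` and the pair correlations bounded by `C s²` it yields
`ν (⋃_{Q ∈ Q_k} S'_Q) ≥ s² / (s + 2 C s²) ≥ 1 / (2 C + c⁻¹)` for every large `k`. Since `ν` is
finite, the measure of the limsup of these unions is at least the same bound, and that limsup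
lies in `limsup_{Q → ∞} S'_Q` because `Q_k ⊆ [k, ∞)`.
-/

open MeasureTheory ProbabilityTheory Filter Set
open scoped ENNReal

theorem Finset.sum_product_self_eq_sum_diag_add_two_nsmul {ι M : Type*} [LinearOrder ι]
    [AddCommMonoid M] (s : Finset ι) {f : ι → ι → M} (hf : ∀ i j, f i j = f j i) :
    ∑ p ∈ s ×ˢ s, f p.1 p.2 = ∑ i ∈ s, f i i + 2 • ∑ p ∈ s ×ˢ s with p.1 < p.2, f p.1 p.2 := by
  have htri : ∀ p : ι × ι, f p.1 p.2 = (if p.1 < p.2 then f p.1 p.2 else 0) +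
      (if p.1 = p.2 then f p.1 p.2 else 0) + (if p.2 < p.1 then f p.1 p.2 else 0) := by
    rintro ⟨i, j⟩
    rcases lt_trichotomy i j with h | rfl | h
    · simp [h, h.not_gt, h.ne]
    · simp
    · simp [h, h.not_gt, h.ne']
  have hgt : ∑ p ∈ s ×ˢ s with p.2 < p.1, f p.1 p.2 = ∑ p ∈ s ×ˢ s with p.1 < p.2, f p.1 p.2 :=
    Finset.sum_equiv (Equiv.prodComm ι ι) (by simp [and_comm]) (fun p _ => hf _ _)
  have hdiag : ∑ p ∈ s ×ˢ s, (if p.1 = p.2 then f p.1 p.2 else 0) = ∑ i ∈ s, f i i := by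
    rw [Finset.sum_product]
    exact Finset.sum_congr rfl fun i hi => by simp [hi]
  rw [Finset.sum_congr rfl fun p _ => htri p, Finset.sum_add_distrib, Finset.sum_add_distrib,
    hdiag, ← Finset.sum_filter, ← Finset.sum_filter, hgt, two_nsmul]
  abel

theorem one_div_le_of_sq_le_mul {c C s P u : ℝ} (hc : 0 < c) (hs : c ≤ s) (hP : P ≤ C * s ^ 2)
    (hu : 0 ≤ u) (h : s ^ 2 ≤ (s + 2 * P) * u) : 1 / (2 * C + c⁻¹) ≤ u := by
  have hs0 : 0 < s := hc.trans_le hs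
  have hsc : s ≤ s ^ 2 * c⁻¹ := by
    rw [le_mul_inv_iff₀ hc]
    nlinarith
  have key : 1 ≤ (2 * C + c⁻¹) * u := by
    have : s ^ 2 * 1 ≤ s ^ 2 * ((2 * C + c⁻¹) * u) := by nlinarith
    exact le_of_mul_le_mul_left this (by positivity)
  have hD : 0 < 2 * C + c⁻¹ := by
    by_contra! hD
    nlinarith
  rw [div_le_iff₀ hD]
  linarith

namespace MeasureTheory

variable {α : Type*} [MeasurableSpace α] (μ : Measure α)

theorem sq_lintegral_mul_le {f g : α → ℝ≥0∞} (hf : AEMeasurable f μ) (hg : AEMeasurable g μ) :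
    (∫⁻ a, f a * g a ∂μ) ^ 2 ≤ (∫⁻ a, f a ^ 2 ∂μ) * ∫⁻ a, g a ^ 2 ∂μ := by
  have holder := ENNReal.lintegral_mul_le_Lp_mul_Lq μ .two_two hf hg
  simp only [Pi.mul_apply, ENNReal.rpow_two] at holder
  calc (∫⁻ a, f a * g a ∂μ) ^ 2
      ≤ ((∫⁻ a, f a ^ 2 ∂μ) ^ (1 / 2 : ℝ) * (∫⁻ a, g a ^ 2 ∂μ) ^ (1 / 2 : ℝ)) ^ 2 := by
        gcongr
    _ = (∫⁻ a, f a ^ 2 ∂μ) * ∫⁻ a, g a ^ 2 ∂μ := by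
        rw [mul_pow, ← ENNReal.rpow_two, ← ENNReal.rpow_two, ← ENNReal.rpow_mul,
          ← ENNReal.rpow_mul]
        norm_num

theorem sq_lintegral_le_lintegral_sq_mul_measure {f : α → ℝ≥0∞} (hf : AEMeasurable f μ)
    {U : Set α} (hfU : Function.support f ⊆ U) :
    (∫⁻ a, f a ∂μ) ^ 2 ≤ (∫⁻ a, f a ^ 2 ∂μ) * μ U := by
  have hCS := sq_lintegral_mul_le (μ.restrict U) hf.restrict (g := 1) aemeasurable_const
  simp only [Pi.one_apply, mul_one, one_pow, lintegral_one, Measure.restrict_apply_univ,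
    setLIntegral_eq_of_support_subset hfU] at hCS
  exact hCS.trans (mul_le_mul_left (setLIntegral_le_lintegral U _) _)

/-- The Chung–Erdős inequality. -/
theorem sq_sum_measure_le_sum_measure_inter_mul {ι : Type*} (F : Finset ι) {A : ι → Set α}
    (hA : ∀ i, MeasurableSet (A i)) :
    (∑ i ∈ F, μ (A i)) ^ 2 ≤ (∑ p ∈ F ×ˢ F, μ (A p.1 ∩ A p.2)) * μ (⋃ i ∈ F, A i) := by
  set f : α → ℝ≥0∞ := fun x => ∑ i ∈ F, (A i).indicator 1 x
  have hf : Measurable f := Finset.measurable_sum _ fun i _ => measurable_one.indicator (hA i)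
  have hint : ∫⁻ x, f x ∂μ = ∑ i ∈ F, μ (A i) := by
    rw [lintegral_finsetSum _ fun i _ => measurable_one.indicator (hA i)]
    exact Finset.sum_congr rfl fun i _ => lintegral_indicator_one (hA i)
  have hsq : ∫⁻ x, f x ^ 2 ∂μ = ∑ p ∈ F ×ˢ F, μ (A p.1 ∩ A p.2) := by
    have hf2 : ∀ x, f x ^ 2 = ∑ p ∈ F ×ˢ F, (A p.1 ∩ A p.2).indicator 1 x := fun x => by
      simp only [f, sq, Finset.sum_mul_sum, ← Finset.sum_product', Set.inter_indicator_one,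
        Pi.mul_apply]
    simp_rw [hf2]
    rw [lintegral_finsetSum _ fun p _ => measurable_one.indicator ((hA p.1).inter (hA p.2))]
    exact Finset.sum_congr rfl fun p _ => lintegral_indicator_one ((hA p.1).inter (hA p.2))
  have hsupp : Function.support f ⊆ ⋃ i ∈ F, A i := by
    intro x hx
    obtain ⟨i, hi, hxi⟩ := Finset.exists_ne_zero_of_sum_ne_zero hx
    exact Set.mem_biUnion hi (Set.mem_of_indicator_ne_zero hxi)
  rw [← hint, ← hsq]
  exact sq_lintegral_le_lintegral_sq_mul_measure μ hf.aemeasurable hsupp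

variable [IsFiniteMeasure μ]

theorem sq_sum_measureReal_le {ι : Type*} [LinearOrder ι] (F : Finset ι) {A : ι → Set α}
    (hA : ∀ i, MeasurableSet (A i)) :
    (∑ i ∈ F, μ.real (A i)) ^ 2 ≤
      (∑ i ∈ F, μ.real (A i) + 2 * ∑ p ∈ F ×ˢ F with p.1 < p.2, μ.real (A p.1 ∩ A p.2)) *
        μ.real (⋃ i ∈ F, A i) := by
  have h := ENNReal.toReal_mono (ENNReal.mul_ne_top
    (ENNReal.sum_ne_top.2 fun _ _ => measure_ne_top μ _) (measure_ne_top μ _))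
    (sq_sum_measure_le_sum_measure_inter_mul μ F hA)
  rw [ENNReal.toReal_pow, ENNReal.toReal_mul, ENNReal.toReal_sum (by finiteness),
    ENNReal.toReal_sum (by finiteness)] at h
  simp only [← measureReal_def] at h
  rw [Finset.sum_product_self_eq_sum_diag_add_two_nsmul F (f := fun i j => μ.real (A i ∩ A j))
    (fun i j => by rw [Set.inter_comm]), nsmul_eq_mul, Nat.cast_ofNat] at h
  simpa only [Set.inter_self] using h

theorem le_measureReal_limsup_atTop {s : ℕ → Set α} (hs : ∀ n, MeasurableSet (s n)) {r : ℝ}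
    (hr : ∀ᶠ n in atTop, r ≤ μ.real (s n)) : r ≤ μ.real (limsup s atTop) := by
  rw [measureReal_def, ← ENNReal.ofReal_le_iff_le_toReal (measure_ne_top μ _),
    limsup_eq_iInf_iSup_of_nat]
  have hanti : Antitone fun n => ⋃ i ≥ n, s i := fun _ _ hmn => biSup_mono fun _ hi => hmn.trans hi
  refine ge_of_tendsto (tendsto_measure_iInter_atTop (fun n => (MeasurableSet.biUnion
    (Set.to_countable _) fun i _ => hs i).nullMeasurableSet) hanti ⟨0, measure_ne_top μ _⟩) ?_
  filter_upwards [hr] with n hn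
  exact (ENNReal.ofReal_le_of_le_toReal hn).trans
    (measure_mono (Set.subset_biUnion_of_mem (u := s) (le_refl n)))

end MeasureTheory

theorem limsup_biUnion_subset_of_subset_Ici {β : Type*} (S : ℝ → Set β) (QQ : Set ℝ)
    (Qk : ℕ → Finset ℝ) (hQk : ∀ k : ℕ, ↑(Qk k) ⊆ QQ ∩ Set.Ici (k : ℝ)) :
    limsup (fun k => ⋃ Q ∈ Qk k, S Q) atTop ⊆ {x | ∀ N : ℝ, ∃ Q ∈ QQ, N ≤ Q ∧ x ∈ S Q} := by
  intro x hx N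
  obtain ⟨k, hk, hxk⟩ := frequently_atTop.1 (mem_limsup_iff_frequently_mem.1 hx) ⌈N⌉₊
  obtain ⟨Q, hQ, hxQ⟩ := Set.mem_iUnion₂.1 hxk
  obtain ⟨hQQ, hkQ⟩ := hQk k hQ
  exact ⟨Q, hQQ, (Nat.le_ceil N).trans ((Nat.cast_le.2 hk).trans hkQ), hxQ⟩

theorem toReal_volume_inter_Icc_div (a b : ℝ) (s : Set ℝ) :
    (volume (s ∩ Icc a b)).toReal / (b - a) = (volume[|Icc a b]).real s := by
  rcases lt_or_ge b a with hba | hab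
  · simp [Icc_eq_empty_of_lt hba]
  rw [measureReal_def, cond_apply measurableSet_Icc, ENNReal.toReal_mul, ENNReal.toReal_inv,
    Real.volume_Icc, ENNReal.toReal_ofReal (sub_nonneg.2 hab), Set.inter_comm, div_eq_inv_mul]

theorem stmt_16_general (QQ : Set ℝ) (S' : ℝ → Set ℝ)
    (hmeas : ∀ Q : ℝ, MeasurableSet (S' Q))
    (a b : ℝ) (C c : ℝ) (hc : 0 < c)
    (Qk : ℕ → Finset ℝ) (hQk : ∀ k : ℕ, ↑(Qk k) ⊆ QQ ∩ Set.Ici (k : ℝ))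
    (k₀ : ℕ)
    (h1 : ∀ k : ℕ, k₀ ≤ k →
      c ≤ ∑ Q ∈ Qk k, (volume (S' Q ∩ Set.Icc a b)).toReal / (b - a))
    (h2 : ∀ k : ℕ, k₀ ≤ k →
      ∑ P ∈ (Qk k ×ˢ Qk k).filter (fun P => P.1 < P.2),
          (volume (S' P.1 ∩ S' P.2 ∩ Set.Icc a b)).toReal / (b - a) ≤
        C * (∑ Q ∈ Qk k, (volume (S' Q ∩ Set.Icc a b)).toReal / (b - a)) ^ 2) :
    1 / (2 * C + c⁻¹) ≤
      (volume ({x : ℝ | ∀ N : ℝ, ∃ Q ∈ QQ, N ≤ Q ∧ x ∈ S' Q} ∩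
          Set.Icc a b)).toReal / (b - a) := by
  simp only [toReal_volume_inter_Icc_div a b] at h1 h2 ⊢
  set ν := volume[|Icc a b]
  have hunion : ∀ k ≥ k₀, 1 / (2 * C + c⁻¹) ≤ ν.real (⋃ Q ∈ Qk k, S' Q) := fun k hk =>
    one_div_le_of_sq_le_mul hc (h1 k hk) (h2 k hk) measureReal_nonneg
      (sq_sum_measureReal_le ν (Qk k) hmeas)
  calc 1 / (2 * C + c⁻¹) ≤ ν.real (limsup (fun k => ⋃ Q ∈ Qk k, S' Q) atTop) :=
        le_measureReal_limsup_atTop ν (fun k => Finset.measurableSet_biUnion _ fun Q _ => hmeas Q)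
          (eventually_atTop.2 ⟨k₀, hunion⟩)
    _ ≤ ν.real {x | ∀ N : ℝ, ∃ Q ∈ QQ, N ≤ Q ∧ x ∈ S' Q} :=
        measureReal_mono (limsup_biUnion_subset_of_subset_Ici S' QQ Qk hQk)

theorem stmt_16 (QQ : Set ℝ) (hQQ : QQ.Countable) (S' : ℝ → Set ℝ)
    (hmeas : ∀ Q : ℝ, MeasurableSet (S' Q))
    (a b : ℝ) (hab : a < b) (C c : ℝ) (hC : 0 < C) (hc : 0 < c)
    (Qk : ℕ → Finset ℝ) (hQk : ∀ k : ℕ, ↑(Qk k) ⊆ QQ ∩ Set.Ici (k : ℝ))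
    (k₀ : ℕ)
    (h1 : ∀ k : ℕ, k₀ ≤ k →
      c ≤ ∑ Q ∈ Qk k, (volume (S' Q ∩ Set.Icc a b)).toReal / (b - a))
    (h2 : ∀ k : ℕ, k₀ ≤ k →
      ∑ P ∈ (Qk k ×ˢ Qk k).filter (fun P => P.1 < P.2),
          (volume (S' P.1 ∩ S' P.2 ∩ Set.Icc a b)).toReal / (b - a) ≤
        C * (∑ Q ∈ Qk k, (volume (S' Q ∩ Set.Icc a b)).toReal / (b - a)) ^ 2) :
    1 / (2 * C + c⁻¹) ≤
      (volume ({x : ℝ | ∀ N : ℝ, ∃ Q ∈ QQ, N ≤ Q ∧ x ∈ S' Q} ∩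
          Set.Icc a b)).toReal / (b - a) :=
  stmt_16_general QQ S' hmeas a b C c hc Qk hQk k₀ h1 h2
end

section
/- Let g : I → ℝ be C¹ on an interval I ⊂ ℝ with g' positive and increasing on I, and let 0 < η < 1/4. Let k₀ be the smallest integer k with g(I) ∩ B(k, η) ≠ ∅. Then |I ∩ g^{−1}(N(ℤ, η))| ≤ |I ∩ g^{−1}(B(k₀, η))| + 4η ∫_{g(I)} (g^{−1})'; in particular |I ∩ g^{−1}(N(ℤ, η))| ≤ |I ∩ g^{−1}(B(k₀, η))| + 4η |I|. -/
open MeasureTheory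

theorem stmt_19 (a b : ℝ) (hab : a ≤ b) (g g' : ℝ → ℝ)
    (hderiv : ∀ t ∈ Set.Icc a b, HasDerivWithinAt g (g' t) (Set.Icc a b) t)
    (hcont : ContinuousOn g' (Set.Icc a b))
    (hpos : ∀ t ∈ Set.Icc a b, 0 < g' t)
    (hmono : MonotoneOn g' (Set.Icc a b))
    (η : ℝ) (hη0 : 0 < η) (hη : η < 1 / 4)
    (k₀ : ℤ)
    -- `k₀` is the smallest integer `k` with `g(I) ∩ B(k, η) ≠ ∅`
    (hk₀ : ∃ t ∈ Set.Icc a b, |g t - (k₀ : ℝ)| ≤ η)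
    (hk₀min : ∀ k : ℤ, (∃ t ∈ Set.Icc a b, |g t - (k : ℝ)| ≤ η) → k₀ ≤ k) :
    volume {t ∈ Set.Icc a b | ∃ k : ℤ, |g t - (k : ℝ)| ≤ η} ≤
      volume {t ∈ Set.Icc a b | |g t - (k₀ : ℝ)| ≤ η} +
        ENNReal.ofReal (4 * η * (b - a)) := by
  have hgc : ContinuousOn g (Set.Icc a b) := fun t ht => (hderiv t ht).continuousWithinAt
  -- MVT bounds
  have mvt : ∀ s ∈ Set.Icc a b, ∀ t ∈ Set.Icc a b, s < t →
      g' s * (t - s) ≤ g t - g s ∧ g t - g s ≤ g' t * (t - s) := by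
    intro s hs t ht hst
    have hsub : Set.Icc s t ⊆ Set.Icc a b := Set.Icc_subset_Icc hs.1 ht.2
    have hco : ContinuousOn g (Set.Icc s t) := hgc.mono hsub
    have hdo : ∀ x ∈ Set.Ioo s t, HasDerivAt g (g' x) x := by
      intro x hx
      have hx' : x ∈ Set.Icc a b := hsub (Set.Ioo_subset_Icc_self hx)
      have hnb : Set.Icc a b ∈ nhds x :=
        Icc_mem_nhds (lt_of_le_of_lt hs.1 hx.1) (lt_of_lt_of_le hx.2 ht.2)
      exact (hderiv x hx').hasDerivAt hnb
    obtain ⟨c, hc, hc2⟩ := exists_hasDerivAt_eq_slope g g' hst hco hdo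
    have hcmem : c ∈ Set.Icc a b := hsub (Set.Ioo_subset_Icc_self hc)
    have h1 : g' s ≤ g' c := hmono hs hcmem (le_of_lt hc.1)
    have h2 : g' c ≤ g' t := hmono hcmem ht (le_of_lt hc.2)
    have hts : 0 < t - s := sub_pos.mpr hst
    have hcm : g' c * (t - s) = g t - g s := by
      rw [hc2]; field_simp
    constructor
    · nlinarith
    · nlinarith
  have hmg : MonotoneOn g (Set.Icc a b) := by
    intro s hs t ht hst
    rcases eq_or_lt_of_le hst with rfl | h
    · exact le_rfl
    · have hlow := (mvt s hs t ht h).1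
      have hgp := hpos s hs
      nlinarith
  -- the interval sets
  set Sk : ℤ → Set ℝ := fun k => {t ∈ Set.Icc a b | |g t - (k : ℝ)| ≤ η} with hSk
  set Gk : ℤ → Set ℝ := fun k => Set.Icc a b ∩ g ⁻¹' (Set.Icc ((k : ℝ) - 1 + η) ((k : ℝ) - η))
    with hGk
  have hGmeas : ∀ k : ℤ, MeasurableSet (Gk k) := by
    intro k
    have : IsClosed (Gk k) :=
      ContinuousOn.preimage_isClosed_of_isClosed hgc isClosed_Icc isClosed_Icc
    exact this.measurableSet
  -- witness for k₀
  obtain ⟨t₀, ht₀, ht₀k⟩ := hk₀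
  have hga : g a ≤ (k₀ : ℝ) + η := by
    have : g a ≤ g t₀ := hmg ⟨le_rfl, hab⟩ ht₀ ht₀.1
    have := abs_le.mp ht₀k
    linarith [this.2]
  -- key bound
  have key : ∀ k : ℤ, k₀ < k → volume (Sk k) ≤ ENNReal.ofReal (4 * η) * volume (Gk k) := by
    intro k hk
    rcases Set.eq_empty_or_nonempty (Sk k) with he | ⟨t₁, ht₁⟩
    · simp [he]
    · obtain ⟨ht₁m, ht₁k⟩ := ht₁
      have habs := abs_le.mp ht₁k
      have hk1 : (k₀ : ℝ) ≤ (k : ℝ) - 1 := by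
        have : k₀ + 1 ≤ k := hk
        exact_mod_cast by push_cast; linarith [(show ((k₀:ℝ)+1 ≤ (k:ℝ)) from by exact_mod_cast this)]
      have hga' : g a ≤ (k : ℝ) - 1 + η := by linarith
      have hgt₁ : (k : ℝ) - η ≤ g t₁ := by linarith [habs.1]
      have hsub1 : Set.Icc a t₁ ⊆ Set.Icc a b := Set.Icc_subset_Icc le_rfl ht₁m.2
      have hiv : Set.Icc (g a) (g t₁) ⊆ g '' Set.Icc a t₁ :=
        intermediate_value_Icc ht₁m.1 (hgc.mono hsub1)
      obtain ⟨p, hpm, hgp⟩ := hiv ⟨hga', by linarith⟩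
      obtain ⟨q, hqm, hgq⟩ := hiv ⟨by linarith, hgt₁⟩
      have hpab : p ∈ Set.Icc a b := hsub1 hpm
      have hqab : q ∈ Set.Icc a b := hsub1 hqm
      have hη2 : (k : ℝ) - 1 + η < (k : ℝ) - η := by linarith
      have hpq : p < q := by
        by_contra h
        push_neg at h
        have := hmg hqab hpab h
        rw [hgp, hgq] at this
        linarith
      have hq' := hpos q hqab
      -- gap contained in Gk
      have hGsub : Set.Icc p q ⊆ Gk k := by
        intro t ht
        have htab : t ∈ Set.Icc a b := ⟨le_trans hpab.1 ht.1, le_trans ht.2 hqab.2⟩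
        refine ⟨htab, ?_, ?_⟩
        · rw [← hgp]; exact hmg hpab htab ht.1
        · rw [← hgq]; exact hmg htab hqab ht.2
      have hGvol : ENNReal.ofReal (q - p) ≤ volume (Gk k) := by
        calc ENNReal.ofReal (q - p) = volume (Set.Icc p q) := (Real.volume_Icc).symm
          _ ≤ volume (Gk k) := measure_mono hGsub
      -- Sk contained in interval
      have hSsub : Sk k ⊆ Set.Icc q (q + 2 * η / g' q) := by
        intro t ht
        obtain ⟨htab, htk⟩ := ht
        have habs' := abs_le.mp htk
        have hqt : q ≤ t := by
          by_contra h
          push_neg at h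
          have := (mvt t htab q hqab h).1
          have := hpos t htab
          nlinarith [hgq, habs'.1]
        constructor
        · exact hqt
        · rcases eq_or_lt_of_le hqt with rfl | h
          · nlinarith [div_nonneg (by linarith : (0:ℝ) ≤ 2*η) hq'.le]
          · have hlow := (mvt q hqab t htab h).1
            have : g t - g q ≤ 2 * η := by rw [hgq]; linarith [habs'.2]
            rw [div_eq_inv_mul, ← sub_le_iff_le_add']
            calc t - q ≤ (g t - g q) / g' q := by
                  rw [le_div_iff₀ hq']; nlinarith
              _ ≤ (g' q)⁻¹ * (2 * η) := by
                  rw [div_eq_inv_mul]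
                  exact mul_le_mul_of_nonneg_left this (inv_nonneg.mpr hq'.le)
      have hSvol : volume (Sk k) ≤ ENNReal.ofReal (2 * η / g' q) := by
        calc volume (Sk k) ≤ volume (Set.Icc q (q + 2 * η / g' q)) := measure_mono hSsub
          _ = ENNReal.ofReal (q + 2 * η / g' q - q) := Real.volume_Icc
          _ = ENNReal.ofReal (2 * η / g' q) := by ring_nf
      -- gap length bound
      have hgap : (1 - 2 * η) / g' q ≤ q - p := by
        have hup := (mvt p hpab q hqab hpq).2
        rw [hgp, hgq] at hup
        rw [div_le_iff₀ hq']
        nlinarith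
      have hfinal : 2 * η / g' q ≤ 4 * η * (q - p) := by
        have h1 : (0:ℝ) < 1 - 2 * η := by linarith
        have h2 : 2 * η / g' q ≤ 2 * η / (1 - 2 * η) * (q - p) := by
          rw [div_le_iff₀ hq'] at hgap ⊢
          rw [div_mul_eq_mul_div, div_mul_eq_mul_div, le_div_iff₀ h1]
          nlinarith
        have h3 : 2 * η / (1 - 2 * η) ≤ 4 * η := by
          rw [div_le_iff₀ h1]; nlinarith
        have hqp : (0:ℝ) ≤ q - p := by linarith
        nlinarith
      calc volume (Sk k) ≤ ENNReal.ofReal (2 * η / g' q) := hSvol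
        _ ≤ ENNReal.ofReal (4 * η * (q - p)) := ENNReal.ofReal_le_ofReal hfinal
        _ = ENNReal.ofReal (4 * η) * ENNReal.ofReal (q - p) :=
            ENNReal.ofReal_mul (by linarith)
        _ ≤ ENNReal.ofReal (4 * η) * volume (Gk k) := by
            exact mul_le_mul_right hGvol _
  -- disjointness of gaps
  have hGdisj : Pairwise (Function.onFun Disjoint (fun k : {k : ℤ // k₀ < k} => Gk k)) := by
    intro ⟨k, hk⟩ ⟨k', hk'⟩ hne
    have hkk : k ≠ k' := by simpa using hne
    apply Set.disjoint_left.mpr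
    intro t ht ht'
    obtain ⟨_, h1, h2⟩ := ht
    obtain ⟨_, h3, h4⟩ := ht'
    rcases lt_or_gt_of_ne hkk with h | h
    · have : (k : ℝ) + 1 ≤ (k' : ℝ) := by exact_mod_cast h
      linarith
    · have : (k' : ℝ) + 1 ≤ (k : ℝ) := by exact_mod_cast h
      linarith
  -- sum of gaps
  have hGsum : ∑' k : {k : ℤ // k₀ < k}, volume (Gk k) ≤ ENNReal.ofReal (b - a) := by
    rw [← measure_iUnion hGdisj (fun k => hGmeas k)]
    calc volume (⋃ k : {k : ℤ // k₀ < k}, Gk k) ≤ volume (Set.Icc a b) := by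
          apply measure_mono
          intro t ht
          simp only [Set.mem_iUnion] at ht
          obtain ⟨k, hk⟩ := ht
          exact hk.1
      _ = ENNReal.ofReal (b - a) := Real.volume_Icc
  -- main decomposition
  have hdecomp : {t ∈ Set.Icc a b | ∃ k : ℤ, |g t - (k : ℝ)| ≤ η} ⊆
      Sk k₀ ∪ ⋃ k : {k : ℤ // k₀ < k}, Sk k := by
    intro t ⟨htab, k, hk⟩
    have hkk₀ : k₀ ≤ k := hk₀min k ⟨t, htab, hk⟩
    rcases eq_or_lt_of_le hkk₀ with rfl | h
    · exact Or.inl ⟨htab, hk⟩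
    · exact Or.inr (Set.mem_iUnion.mpr ⟨⟨k, h⟩, htab, hk⟩)
  calc volume {t ∈ Set.Icc a b | ∃ k : ℤ, |g t - (k : ℝ)| ≤ η}
      ≤ volume (Sk k₀ ∪ ⋃ k : {k : ℤ // k₀ < k}, Sk k) := measure_mono hdecomp
    _ ≤ volume (Sk k₀) + volume (⋃ k : {k : ℤ // k₀ < k}, Sk k) := measure_union_le _ _
    _ ≤ volume (Sk k₀) + ∑' k : {k : ℤ // k₀ < k}, volume (Sk k) := by
        exact add_le_add_right (measure_iUnion_le _) _
    _ ≤ volume (Sk k₀) + ENNReal.ofReal (4 * η * (b - a)) := by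
        apply add_le_add_right
        calc ∑' k : {k : ℤ // k₀ < k}, volume (Sk k)
            ≤ ∑' k : {k : ℤ // k₀ < k}, ENNReal.ofReal (4 * η) * volume (Gk k) :=
              ENNReal.tsum_le_tsum (fun k => key k k.2)
          _ = ENNReal.ofReal (4 * η) * ∑' k : {k : ℤ // k₀ < k}, volume (Gk k) :=
              ENNReal.tsum_mul_left
          _ ≤ ENNReal.ofReal (4 * η) * ENNReal.ofReal (b - a) :=
              mul_le_mul_right hGsum _
          _ = ENNReal.ofReal (4 * η * (b - a)) :=
              (ENNReal.ofReal_mul (by linarith)).symm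
end
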